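/- arXiv:2411.16288 — 6 statements merged into one kernel-verified Lean document; each statement's English description precedes it below -/
import Mathlib

section
/- Hoffman's ratio bound: if Γ is a k-regular graph on v vertices with adjacency matrix A having smallest eigenvalue λ < 0, and Y is an independent set (coclique) of Γ, then |Y| ≤ v / (1 - k/λ). -/
/-!
Every eigenvalue of `A` is at least `λ`, so `A - λ I` is positive semidefinite and
`λ ‖x‖² ≤ xᵀ A x` for every `x`. Apply this to `x = v 1_Y - |Y| 1`: since `Y` is independent,
`1_Yᵀ A 1_Y = 0`, and since `Γ` is `k`-regular, `A 1 = k 1`. This gives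
`λ v |Y| (v - |Y|) ≤ -k v |Y|²`, i.e. `(k - λ) |Y| ≤ -λ v`.
-/

open Finset Matrix

namespace Matrix

variable {n : Type*} [Fintype n] [DecidableEq n]

theorem IsHermitian.posSemidef_sub_smul_one {A : Matrix n n ℝ} (hA : A.IsHermitian) {lam : ℝ}
    (hmin : ∀ (μ : ℝ) (v : n → ℝ), v ≠ 0 → A *ᵥ v = μ • v → lam ≤ μ) :
    (A - lam • (1 : Matrix n n ℝ)).PosSemidef := by
  have hB : (A - lam • (1 : Matrix n n ℝ)).IsHermitian :=
    hA.sub (isHermitian_one.smul (IsSelfAdjoint.all lam))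
  rw [hB.posSemidef_iff_eigenvalues_nonneg]
  intro j
  have hAe : A *ᵥ ⇑(hB.eigenvectorBasis j) =
      (hB.eigenvalues j + lam) • ⇑(hB.eigenvectorBasis j) := by
    have hBe := hB.mulVec_eigenvectorBasis j
    rw [sub_mulVec, smul_mulVec, one_mulVec] at hBe
    rw [add_smul]
    linear_combination (norm := module) hBe
  have hne : (⇑(hB.eigenvectorBasis j) : n → ℝ) ≠ 0 := by
    simpa [funext_iff] using hB.eigenvectorBasis.orthonormal.ne_zero j
  simpa using hmin _ _ hne hAe

theorem IsHermitian.mul_dotProduct_self_le {A : Matrix n n ℝ} (hA : A.IsHermitian) {lam : ℝ}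
    (hmin : ∀ (μ : ℝ) (v : n → ℝ), v ≠ 0 → A *ᵥ v = μ • v → lam ≤ μ) (x : n → ℝ) :
    lam * (x ⬝ᵥ x) ≤ x ⬝ᵥ A *ᵥ x := by
  have h := (hA.posSemidef_sub_smul_one hmin).dotProduct_mulVec_nonneg x
  simp only [star_trivial, sub_mulVec, smul_mulVec, one_mulVec, dotProduct_sub,
    dotProduct_smul, smul_eq_mul] at h
  linarith

end Matrix

namespace SimpleGraph

variable {V : Type*} [Fintype V] {G : SimpleGraph V} [DecidableRel G.Adj]

theorem IsRegularOfDegree.adjMatrix_mulVec_one {α : Type*} [NonAssocSemiring α] {k : ℕ}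
    (hreg : G.IsRegularOfDegree k) : G.adjMatrix α *ᵥ 1 = (k : α) • 1 := by
  ext v
  simp [hreg v]

theorem IsIndepSet.indicator_dotProduct_adjMatrix_mulVec {α : Type*} [NonAssocSemiring α]
    {s : Set V} (hs : G.IsIndepSet s) :
    s.indicator 1 ⬝ᵥ G.adjMatrix α *ᵥ s.indicator 1 = 0 := by
  rw [dotProduct_mulVec_adjMatrix]
  refine Finset.sum_eq_zero fun i _ => Finset.sum_eq_zero fun j _ => ?_
  by_cases hi : i ∈ s <;> by_cases hj : j ∈ s <;> simp [hi, hj]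
  exact fun hadj => (hs hi hj hadj.ne hadj).elim

theorem IsRegularOfDegree.sub_mul_card_le_of_isIndepSet [DecidableEq V] {k : ℕ}
    (hreg : G.IsRegularOfDegree k) {lam : ℝ} (hlam : lam ≤ 0)
    (hmin : ∀ (μ : ℝ) (v : V → ℝ), v ≠ 0 → G.adjMatrix ℝ *ᵥ v = μ • v → lam ≤ μ)
    {Y : Finset V} (hY : G.IsIndepSet (Y : Set V)) :
    ((k : ℝ) - lam) * #Y ≤ -lam * Fintype.card V := by
  have hy0 : (0 : ℝ) ≤ #Y := Nat.cast_nonneg _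
  have hyn : (#Y : ℝ) ≤ Fintype.card V := by exact_mod_cast Y.card_le_univ
  set A := G.adjMatrix ℝ
  set a : V → ℝ := (Y : Set V).indicator 1
  set n : ℝ := (Fintype.card V : ℝ)
  set y : ℝ := (#Y : ℝ)
  have haa : a ⬝ᵥ a = y := by simp [a, y, dotProduct, Set.indicator_apply]
  have h1a : 1 ⬝ᵥ a = y := by simp [a, y, dotProduct, Set.indicator_apply]
  have ha1 : a ⬝ᵥ 1 = y := by simp [a, y, dotProduct, Set.indicator_apply]
  have h11 : (1 : V → ℝ) ⬝ᵥ 1 = n := by simp [n, dotProduct]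
  have hA1 : A *ᵥ 1 = (k : ℝ) • 1 := hreg.adjMatrix_mulVec_one
  have h1Aa : 1 ⬝ᵥ A *ᵥ a = k * y := by
    rw [dotProduct_mulVec, ← mulVec_transpose, transpose_adjMatrix, hA1, smul_dotProduct, h1a,
      smul_eq_mul]
  have haAa : a ⬝ᵥ A *ᵥ a = 0 := hY.indicator_dotProduct_adjMatrix_mulVec
  set x : V → ℝ := n • a - y • 1
  have hxx : x ⬝ᵥ x = n * y * (n - y) := by
    simp only [x, sub_dotProduct, dotProduct_sub, smul_dotProduct, dotProduct_smul, haa, h1a, ha1,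
      h11, smul_eq_mul]
    ring
  have hxAx : x ⬝ᵥ A *ᵥ x = -(k * n * y ^ 2) := by
    simp only [x, mulVec_sub, mulVec_smul, hA1, sub_dotProduct, dotProduct_sub, smul_dotProduct,
      dotProduct_smul, ha1, h11, haAa, h1Aa, smul_eq_mul]
    ring
  have hrayleigh := (G.isHermitian_adjMatrix ℝ).mul_dotProduct_self_le hmin x
  rw [hxx, hxAx] at hrayleigh
  rcases hy0.eq_or_lt with hy | hy
  · nlinarith
  · have hny : 0 < n * y := mul_pos (hy.trans_le hyn) hy
    nlinarith

end SimpleGraph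

theorem stmt_4_general {V : Type*} [Fintype V] [DecidableEq V]
    (G : SimpleGraph V) [DecidableRel G.Adj]
    (k : ℕ) (hreg : G.IsRegularOfDegree k) (lam : ℝ) (hneg : lam < 0)
    (hlam_min : ∀ (μ : ℝ) (v : V → ℝ), v ≠ 0 → (G.adjMatrix ℝ).mulVec v = μ • v → lam ≤ μ)
    (Y : Finset V) (hY : ∀ x ∈ Y, ∀ y ∈ Y, ¬ G.Adj x y) :
    (Y.card : ℝ) ≤ (Fintype.card V : ℝ) / (1 - (k : ℝ) / lam) := by
  have hbound := hreg.sub_mul_card_le_of_isIndepSet hneg.le hlam_min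
    (Y := Y) fun x hx y hy _ => hY x hx y hy
  have hden : 0 < 1 - (k : ℝ) / lam := by
    have : (k : ℝ) / lam ≤ 0 := div_nonpos_of_nonneg_of_nonpos k.cast_nonneg hneg.le
    linarith
  have hrw : (Y.card : ℝ) * (1 - k / lam) = ((k - lam) * Y.card) / -lam := by
    field_simp [hneg.ne]
    ring
  rw [le_div_iff₀ hden, hrw, div_le_iff₀ (neg_pos.2 hneg)]
  linarith

/-- Hoffman's ratio bound: a coclique `Y` in a `k`-regular graph with smallest adjacency
eigenvalue `lam < 0` satisfies `|Y| ≤ v / (1 - k/lam)`. -/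
theorem stmt_4 {V : Type*} [Fintype V] [DecidableEq V]
    (G : SimpleGraph V) [DecidableRel G.Adj]
    (k : ℕ) (hreg : G.IsRegularOfDegree k) (lam : ℝ) (hneg : lam < 0)
    (hlam_eig : ∃ v : V → ℝ, v ≠ 0 ∧ (G.adjMatrix ℝ).mulVec v = lam • v)
    (hlam_min : ∀ (μ : ℝ) (v : V → ℝ), v ≠ 0 → (G.adjMatrix ℝ).mulVec v = μ • v → lam ≤ μ)
    (Y : Finset V) (hY : ∀ x ∈ Y, ∀ y ∈ Y, ¬ G.Adj x y) :
    (Y.card : ℝ) ≤ (Fintype.card V : ℝ) / (1 - (k : ℝ) / lam) :=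
  stmt_4_general G k hreg lam hneg hlam_min Y hY
end

section
/- If {X_1, X_2} is an equitable bipartition of the n-dimensional hypercube graph (each vertex in X_i has exactly e_{ij} neighbors in X_j) and the second eigenvalue μ_2 of the 2×2 quotient matrix satisfies μ_2 ≥ n - 2d, then the characteristic function of X_1 has degree at most d as a multilinear polynomial. -/
/-!
The Walsh characters `χ_S x = ∏ i ∈ S, (-1) ^ x i` are eigenvectors of the adjacency operator `A`
of the hypercube with eigenvalue `n - 2|S|`. Equitability says `A 1_{X₁} = (e₁₁ - e₂₁) 1_{X₁} + e₂₁`,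
and comparing the trace `n + μ₂` of the quotient matrix with its row sum `e₂₁ + e₂₂ = n` gives
`μ₂ = e₁₁ - e₂₁`. Pairing with `χ_S` for `S ≠ ∅` (where `χ_S` sums to zero) yields
`(n - 2|S| - μ₂) ⟨1_{X₁}, χ_S⟩ = 0`, so `1_{X₁}` has no Walsh coefficient above level `d`.
Fourier inversion then writes `1_{X₁}` through the `χ_S` with `|S| ≤ d`, and each such `χ_S`,
being `∏ i ∈ S, (1 - 2 x i)`, is a multilinear polynomial of degree `|S|`.
-/

open Finset Polynomial

lemma Matrix.trace_fin_two_eq_add_of_charpoly_eq {R : Type*} [CommRing R]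
    {Q : Matrix (Fin 2) (Fin 2) R} {a b : R} (h : Q.charpoly = (X - C a) * (X - C b)) :
    Q.trace = a + b := by
  have := Matrix.trace_eq_neg_charpoly_coeff Q
  rw [h] at this
  simpa [coeff_X, coeff_C, mul_sub, sub_mul, add_comm] using this

namespace BooleanCube

variable {n : ℕ}

lemma add_self_eq_zero (x : Fin n → Fin 2) : x + x = 0 := by
  funext i
  exact (by decide : ∀ a : Fin 2, a + a = 0) (x i)

lemma hammingDist_eq_one_iff {x y : Fin n → Fin 2} :
    hammingDist x y = 1 ↔ ∃ i, y = x + Pi.single i 1 := by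
  have ne_iff : ∀ a b : Fin 2, a ≠ b ↔ b = a + 1 := by decide
  simp only [hammingDist, card_eq_one, Finset.ext_iff, mem_filter, mem_univ, true_and,
    mem_singleton, funext_iff, Pi.add_apply, Pi.single_apply]
  refine exists_congr fun i => forall_congr' fun j => ?_
  split_ifs with h <;> simp [h, ne_iff, eq_comm]

lemma card_filter_hammingDist_eq_one (x : Fin n → Fin 2) (p : (Fin n → Fin 2) → Prop)
    [DecidablePred p] :
    #{y | hammingDist x y = 1 ∧ p y} = #{i | p (x + Pi.single i 1)} := by
  have hinj : Function.Injective fun i : Fin n => x + Pi.single i 1 := fun i j h => by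
    simpa [Pi.single_apply, eq_comm] using congrFun h i
  rw [← card_image_of_injective _ hinj]
  congr 1
  ext y
  simp only [mem_filter, mem_univ, true_and, mem_image, hammingDist_eq_one_iff]
  grind

def adj (g : (Fin n → Fin 2) → ℝ) (x : Fin n → Fin 2) : ℝ :=
  ∑ i, g (x + Pi.single i 1)

lemma adj_indicator (s : Finset (Fin n → Fin 2)) (x : Fin n → Fin 2) :
    adj (fun y => if y ∈ s then 1 else 0) x = #{y | hammingDist x y = 1 ∧ y ∈ s} := by
  simp [adj, sum_boole, card_filter_hammingDist_eq_one]

lemma card_neighbors_add_card_neighbors_compl (s : Finset (Fin n → Fin 2)) (x : Fin n → Fin 2) :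
    #{y | hammingDist x y = 1 ∧ y ∈ s} + #{y | hammingDist x y = 1 ∧ y ∈ sᶜ} = n := by
  simp only [card_filter_hammingDist_eq_one, mem_compl, card_filter_add_card_filter_not,
    card_univ, Fintype.card_fin]

def walsh (S : Finset (Fin n)) (x : Fin n → Fin 2) : ℝ :=
  ∏ i ∈ S, (-1) ^ (x i : ℕ)

lemma walsh_add (S : Finset (Fin n)) (x y : Fin n → Fin 2) :
    walsh S (x + y) = walsh S x * walsh S y := by
  have neg_one_pow_add : ∀ a b : Fin 2,
      (-1 : ℝ) ^ ((a + b : Fin 2) : ℕ) = (-1) ^ (a : ℕ) * (-1) ^ (b : ℕ) := by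
    intro a b; fin_cases a <;> fin_cases b <;> norm_num [Fin.val_add]
  simp only [walsh, Pi.add_apply, neg_one_pow_add, prod_mul_distrib]

lemma walsh_single (S : Finset (Fin n)) (i : Fin n) :
    walsh S (Pi.single i 1) = if i ∈ S then -1 else 1 := by
  by_cases hi : i ∈ S <;> simp [walsh, Pi.single_apply, apply_ite, prod_ite_eq', hi]

lemma sum_walsh_single (S : Finset (Fin n)) :
    ∑ i, walsh S (Pi.single i 1) = n - 2 * #S := by
  have hS : #S ≤ n := by simpa using card_le_univ S
  simp [walsh_single, sum_ite, filter_notMem_eq_sdiff, card_sdiff, Nat.cast_sub hS]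
  ring

lemma sum_walsh_eq_zero {S : Finset (Fin n)} (hS : S.Nonempty) : ∑ x, walsh S x = 0 := by
  obtain ⟨i, hi⟩ := hS
  have h := Fintype.sum_equiv (Equiv.addRight (Pi.single i 1))
    (fun x => walsh S (x + Pi.single i 1)) (walsh S) fun _ => rfl
  simp only [walsh_add, walsh_single, if_pos hi, mul_neg_one, sum_neg_distrib] at h
  linarith

lemma sum_walsh (z : Fin n → Fin 2) :
    ∑ S, walsh S z = if z = 0 then 2 ^ n else 0 := by
  rw [← powerset_univ]
  simp only [walsh, ← prod_one_add]
  split_ifs with hz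
  · simp [hz, one_add_one_eq_two]
  · obtain ⟨i, hi⟩ := Function.ne_iff.mp hz
    have : z i = 1 := (by decide : ∀ a : Fin 2, a ≠ 0 → a = 1) _ hi
    exact prod_eq_zero (mem_univ i) (by simp [this])

lemma sum_adj_mul_walsh (g : (Fin n → Fin 2) → ℝ) (S : Finset (Fin n)) :
    ∑ x, adj g x * walsh S x = (n - 2 * #S) * ∑ x, g x * walsh S x := by
  calc ∑ x, adj g x * walsh S x = ∑ i, ∑ x, g (x + Pi.single i 1) * walsh S x := by
        simp only [adj, sum_mul]
        exact sum_comm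
    _ = ∑ i, ∑ x, g x * walsh S (x + Pi.single i 1) := by
        refine sum_congr rfl fun i _ =>
          Fintype.sum_equiv (Equiv.addRight (Pi.single i 1)) _ _ fun x => ?_
        simp [add_assoc, add_self_eq_zero]
    _ = ∑ i, walsh S (Pi.single i 1) * ∑ x, g x * walsh S x := by
        simp only [walsh_add, mul_sum]
        exact sum_congr rfl fun i _ => sum_congr rfl fun x _ => by ring
    _ = (n - 2 * #S) * ∑ x, g x * walsh S x := by rw [← sum_mul, sum_walsh_single]

lemma sum_sum_mul_walsh_mul_walsh (g : (Fin n → Fin 2) → ℝ) (x : Fin n → Fin 2) :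
    ∑ S, (∑ y, g y * walsh S y) * walsh S x = 2 ^ n * g x := by
  calc ∑ S, (∑ y, g y * walsh S y) * walsh S x = ∑ y, g y * ∑ S, walsh S (y + x) := by
        simp only [sum_mul, mul_sum, walsh_add, mul_assoc]
        exact sum_comm
    _ = ∑ y, g y * if y = x then 2 ^ n else 0 := by
        simp only [sum_walsh, ← add_self_eq_zero x, add_left_inj]
    _ = 2 ^ n * g x := by simp [mul_comm]

lemma sum_mul_walsh_eq_zero_of_adj_eq {g : (Fin n → Fin 2) → ℝ} {a b : ℝ}
    (hg : ∀ x, adj g x = a * g x + b) {S : Finset (Fin n)} (hS : S.Nonempty)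
    (ha : (n : ℝ) - 2 * #S ≠ a) : ∑ x, g x * walsh S x = 0 := by
  have h := sum_adj_mul_walsh g S
  simp only [hg, add_mul, sum_add_distrib, mul_assoc, ← mul_sum, sum_walsh_eq_zero hS,
    mul_zero, add_zero] at h
  have h' : ((n : ℝ) - 2 * #S - a) * ∑ x, g x * walsh S x = 0 := by linarith
  exact (mul_eq_zero.1 h').resolve_left (sub_ne_zero.2 ha)

variable (n) in
def multilinearDegreeLE (d : ℕ) : Submodule ℝ ((Fin n → Fin 2) → ℝ) where
  carrier := {g | ∃ c : Finset (Fin n) → ℝ, (∀ S, d < #S → c S = 0) ∧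
    ∀ x, g x = ∑ S, c S * ∏ i ∈ S, ((x i : ℕ) : ℝ)}
  add_mem' := by
    rintro g h ⟨c, hc, hgc⟩ ⟨c', hc', hhc'⟩
    refine ⟨c + c', fun S hS => by simp [hc S hS, hc' S hS], fun x => ?_⟩
    simp [hgc, hhc', add_mul, sum_add_distrib]
  zero_mem' := ⟨0, fun _ _ => rfl, by simp⟩
  smul_mem' := by
    rintro r g ⟨c, hc, hgc⟩
    refine ⟨r • c, fun S hS => by simp [hc S hS], fun x => ?_⟩
    simp [hgc, mul_sum, mul_assoc]

lemma monomial_mem_multilinearDegreeLE {d : ℕ} {T : Finset (Fin n)} (hT : #T ≤ d) :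
    (fun x : Fin n → Fin 2 => ∏ i ∈ T, ((x i : ℕ) : ℝ)) ∈ multilinearDegreeLE n d := by
  refine ⟨fun S => if S = T then 1 else 0, fun S hS => if_neg ?_, fun x => by simp [ite_mul]⟩
  rintro rfl
  omega

lemma walsh_mem_multilinearDegreeLE {d : ℕ} {S : Finset (Fin n)} (hS : #S ≤ d) :
    walsh S ∈ multilinearDegreeLE n d := by
  have neg_one_pow_eq : ∀ a : Fin 2, (-1 : ℝ) ^ (a : ℕ) = 1 + -2 * ((a : ℕ) : ℝ) := by
    intro a; fin_cases a <;> norm_num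
  have hw : walsh S = ∑ T ∈ S.powerset,
      (-2 : ℝ) ^ #T • fun x : Fin n → Fin 2 => ∏ i ∈ T, ((x i : ℕ) : ℝ) := by
    funext x
    simp only [walsh, neg_one_pow_eq, prod_one_add, Finset.sum_apply, Pi.smul_apply, smul_eq_mul,
      prod_mul_distrib, prod_const]
  rw [hw]
  exact sum_mem fun T hT => Submodule.smul_mem _ _
    (monomial_mem_multilinearDegreeLE ((card_le_card (mem_powerset.1 hT)).trans hS))

lemma mem_multilinearDegreeLE_of_sum_mul_walsh_eq_zero {g : (Fin n → Fin 2) → ℝ} {d : ℕ}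
    (hg : ∀ S, d < #S → ∑ x, g x * walsh S x = 0) : g ∈ multilinearDegreeLE n d := by
  have hg' : g = ∑ S, (((2 : ℝ) ^ n)⁻¹ * ∑ y, g y * walsh S y) • walsh S := by
    funext x
    simp only [Finset.sum_apply, Pi.smul_apply, smul_eq_mul, mul_assoc, ← mul_sum,
      sum_sum_mul_walsh_mul_walsh]
    field_simp
  rw [hg']
  refine sum_mem fun S _ => ?_
  by_cases hS : d < #S
  · simp [hg S hS]
  · exact Submodule.smul_mem _ _ (walsh_mem_multilinearDegreeLE (not_lt.1 hS))

end BooleanCube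

open BooleanCube

/-- If `{X₁, X₂}` is an equitable bipartition of the hypercube graph on `{0,1}^n` whose
quotient matrix has second eigenvalue `μ₂ ≥ n - 2d`, then the characteristic function of
`X₁` is a multilinear polynomial of degree at most `d`. -/
theorem stmt_10 (n d : ℕ)
    (P : Fin 2 → Finset (Fin n → Fin 2))
    (hdisj : Disjoint (P 0) (P 1))
    (hcover : P 0 ∪ P 1 = Finset.univ)
    (hne : ∀ i, (P i).Nonempty)
    (e : Fin 2 → Fin 2 → ℕ)
    (hequit : ∀ i j, ∀ x ∈ P i,
      (Finset.univ.filter (fun y => hammingDist x y = 1 ∧ y ∈ P j)).card = e i j)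
    (Q : Matrix (Fin 2) (Fin 2) ℝ) (hQ : ∀ i j, Q i j = (e i j : ℝ))
    (μ₂ : ℝ)
    (hμ₂ : Q.charpoly = (Polynomial.X - Polynomial.C (n : ℝ)) * (Polynomial.X - Polynomial.C μ₂))
    (hbound : (n : ℝ) - 2 * d ≤ μ₂) :
    ∃ c : Finset (Fin n) → ℝ, (∀ S, d < S.card → c S = 0) ∧
      ∀ x : Fin n → Fin 2,
        (if x ∈ P 0 then (1 : ℝ) else 0) =
          ∑ S : Finset (Fin n), c S * ∏ i ∈ S, ((x i : ℕ) : ℝ) := by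
  classical
  have hP₁ : P 1 = (P 0)ᶜ := (IsCompl.of_eq (disjoint_iff.1 hdisj) hcover).compl_eq.symm
  have hadj : ∀ x, adj (fun y => if y ∈ P 0 then 1 else 0) x =
      ((e 0 0 : ℝ) - e 1 0) * (if x ∈ P 0 then 1 else 0) + e 1 0 := by
    intro x
    rw [adj_indicator]
    by_cases hx : x ∈ P 0
    · simp [hx, hequit 0 0 x hx]
    · simp [hx, hequit 1 0 x (hP₁ ▸ mem_compl.2 hx)]
  have hrow : (e 1 0 : ℝ) + e 1 1 = n := by
    obtain ⟨x, hx⟩ := hne 1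
    have := card_neighbors_add_card_neighbors_compl (P 0) x
    rw [← hP₁, hequit 1 0 x hx, hequit 1 1 x hx] at this
    exact_mod_cast this
  have htrace := Matrix.trace_fin_two_eq_add_of_charpoly_eq hμ₂
  rw [Matrix.trace_fin_two, hQ, hQ] at htrace
  exact mem_multilinearDegreeLE_of_sum_mul_walsh_eq_zero fun S hS =>
    sum_mul_walsh_eq_zero_of_adj_eq hadj (card_pos.1 (by omega)) <| by
      have : (d : ℝ) < #S := by exact_mod_cast hS
      linarith
end

section
/- Block's Lemma (part ii): with the notation of part (i), if B has full row rank |X| (so rank B = |X|), then the number s of G-orbits on X is at most the number t of G-orbits on Y. -/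
/-- Block's Lemma, part (ii): if the incidence matrix `B` of a `G`-invariant relation
`R ⊆ X × Y` has full row rank `|X|`, then the number of `G`-orbits on `X` is at most the
number of `G`-orbits on `Y`. -/
theorem stmt_12 {G X Y : Type*} [Group G] [MulAction G X] [MulAction G Y]
    [Fintype X] [Fintype Y]
    (R : Set (X × Y))
    (hR : ∀ (g : G) (x : X) (y : Y), (x, y) ∈ R → (g • x, g • y) ∈ R)
    (B : Matrix X Y ℝ)
    (hB : ∀ x y, B x y = Set.indicator R (fun _ => (1 : ℝ)) (x, y))
    (hrank : B.rank = Fintype.card X) :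
    Nat.card (MulAction.orbitRel.Quotient G X) ≤ Nat.card (MulAction.orbitRel.Quotient G Y) := by
  classical
  -- invariance of B
  have hBinv : ∀ (g : G) (x : X) (y : Y), B (g • x) (g • y) = B x y := by
    intro g x y
    rw [hB, hB]
    by_cases h : (x, y) ∈ R
    · rw [Set.indicator_of_mem h, Set.indicator_of_mem (hR g x y h)]
    · rw [Set.indicator_of_notMem h, Set.indicator_of_notMem]
      intro hmem
      have := hR g⁻¹ _ _ hmem
      simp only [inv_smul_smul] at this
      exact h this
  -- T : multiplication by B.transpose
  let T : (X → ℝ) →ₗ[ℝ] (Y → ℝ) := B.transpose.mulVecLin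
  have hTinj : Function.Injective T := by
    have hr : Module.finrank ℝ (LinearMap.range T) = Fintype.card X := by
      have h1 : B.transpose.rank = B.rank := Matrix.rank_transpose B
      rw [hrank] at h1
      simpa [Matrix.rank, T] using h1
    have hrn := LinearMap.finrank_range_add_finrank_ker T
    have hd : Module.finrank ℝ (X → ℝ) = Fintype.card X := by
      simp [Module.finrank_pi]
    rw [hr, hd] at hrn
    have hker : Module.finrank ℝ (LinearMap.ker T) = 0 := by omega
    have : LinearMap.ker T = ⊥ := Submodule.finrank_eq_zero.mp hker
    exact LinearMap.ker_eq_bot.mp this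
  have hT : ∀ v y, T v y = ∑ x, B x y * v x := by
    intro v y
    simp only [T, Matrix.mulVecLin_apply, Matrix.mulVec, dotProduct,
      Matrix.transpose_apply]
  -- invariance of T v for orbit-constant v
  let mkX : X → MulAction.orbitRel.Quotient G X := Quotient.mk (MulAction.orbitRel G X)
  have key : ∀ (w : MulAction.orbitRel.Quotient G X → ℝ) (g : G) (y : Y),
      T (w ∘ mkX) (g • y) = T (w ∘ mkX) y := by
    intro w g y
    rw [hT, hT]
    refine Fintype.sum_equiv (MulAction.toPerm g⁻¹ : Equiv.Perm X) _ _ ?_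
    intro x
    have h1 : B x (g • y) = B (g⁻¹ • x) y := by
      have := hBinv g (g⁻¹ • x) y
      rw [smul_inv_smul] at this
      exact this
    have h2 : mkX (g⁻¹ • x) = mkX x := Quotient.sound ⟨g⁻¹, rfl⟩
    simp only [Function.comp_apply, MulAction.toPerm_apply]
    rw [h1, h2]
  -- the composite map
  let L1 : (MulAction.orbitRel.Quotient G X → ℝ) →ₗ[ℝ] (X → ℝ) := LinearMap.funLeft ℝ ℝ mkX
  let outY : MulAction.orbitRel.Quotient G Y → Y := Quotient.out
  let L2 : (Y → ℝ) →ₗ[ℝ] (MulAction.orbitRel.Quotient G Y → ℝ) := LinearMap.funLeft ℝ ℝ outY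
  let Φ := L2.comp (T.comp L1)
  have hΦinj : Function.Injective Φ := by
    rw [← LinearMap.ker_eq_bot]
    rw [Submodule.eq_bot_iff]
    intro w hw
    have hw' : ∀ q, T (w ∘ mkX) (outY q) = 0 := by
      intro q
      have : Φ w q = 0 := by rw [hw]; rfl
      simpa [Φ, L2, L1, LinearMap.funLeft] using this
    have hTv0 : T (w ∘ mkX) = 0 := by
      funext y
      have hrel : (MulAction.orbitRel G Y).r
          (outY (Quotient.mk (MulAction.orbitRel G Y) y)) y :=
        Quotient.exact (Quotient.out_eq _)
      obtain ⟨g, hg⟩ := hrel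
      have := hw' (Quotient.mk (MulAction.orbitRel G Y) y)
      rw [← hg] at this
      rw [key w g y] at this
      simpa using this
    have hv0 : (w ∘ mkX) = 0 := hTinj (by simpa using hTv0)
    funext q
    have : w (mkX q.out) = 0 := congrFun hv0 q.out
    have hq : mkX q.out = q := Quotient.out_eq q
    rw [hq] at this
    simpa using this
  -- conclude by dimension count
  have : Finite (MulAction.orbitRel.Quotient G X) := Quotient.finite _
  have : Finite (MulAction.orbitRel.Quotient G Y) := Quotient.finite _
  have fX := Fintype.ofFinite (MulAction.orbitRel.Quotient G X)
  have fY := Fintype.ofFinite (MulAction.orbitRel.Quotient G Y)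
  have hle := LinearMap.finrank_le_finrank_of_injective hΦinj
  rw [Module.finrank_pi, Module.finrank_pi] at hle
  simpa [Nat.card_eq_fintype_card] using hle
end

section
/- Classification of Boolean degree-1 functions on the Johnson scheme: for m, n-m ≥ 2, if Y is a family of m-subsets of [n] whose characteristic function is of degree at most 1 (an affine function of the indicators x_1,...,x_n), then Y or its complement is either empty or equals the set of all m-sets containing a fixed element i. -/
/-- Classification of Boolean degree-1 functions on the Johnson scheme `J(n,m)` with
`m, n-m ≥ 2`: `Y` or its complement is empty or the family of all `m`-sets through a fixed
element. -/
theorem stmt_13 (n m : ℕ) (hm : 2 ≤ m) (hnm : m + 2 ≤ n)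
    (Y : Finset (Finset (Fin n))) (hYm : ∀ S ∈ Y, S.card = m)
    (c : ℝ) (c' : Fin n → ℝ)
    (hdeg : ∀ S : Finset (Fin n), S.card = m →
      (if S ∈ Y then (1 : ℝ) else 0) = c + ∑ i, c' i * (if i ∈ S then 1 else 0)) :
    Y = ∅ ∨ Y = Finset.powersetCard m Finset.univ ∨
      ∃ i : Fin n,
        Y = (Finset.powersetCard m (Finset.univ : Finset (Fin n))).filter (fun S => i ∈ S) ∨
        Y = (Finset.powersetCard m (Finset.univ : Finset (Fin n))).filter (fun S => i ∉ S) := by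
  classical
  have hg : ∀ S : Finset (Fin n), S.card = m →
      (if S ∈ Y then (1:ℝ) else 0) = c + ∑ i ∈ S, c' i := by
    intro S hS
    rw [hdeg S hS]
    congr 1
    simp only [mul_ite, mul_one, mul_zero]
    rw [Finset.sum_ite_mem, Finset.univ_inter]
  have h01 : ∀ S : Finset (Fin n), S.card = m →
      c + ∑ i ∈ S, c' i = 0 ∨ c + ∑ i ∈ S, c' i = 1 := by
    intro S hS
    rw [← hg S hS]
    split <;> simp
  have hmem : ∀ S : Finset (Fin n), S.card = m →
      (S ∈ Y ↔ c + ∑ i ∈ S, c' i = 1) := by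
    intro S hS
    constructor
    · intro h; rw [← hg S hS, if_pos h]
    · intro h
      by_contra hc
      rw [← hg S hS, if_neg hc] at h
      norm_num at h
  -- existence of m-sets with prescribed/forbidden elements
  have hex : ∀ (A B : Finset (Fin n)), Disjoint A B → A.card ≤ m → m + B.card ≤ n →
      ∃ S : Finset (Fin n), A ⊆ S ∧ Disjoint S B ∧ S.card = m := by
    intro A B hAB hA hB
    obtain ⟨S, hAS, hSsub, hScard⟩ := Finset.exists_subsuperset_card_eq
      (t := Finset.univ \ B)
      (fun x hx => Finset.mem_sdiff.mpr ⟨Finset.mem_univ x, Finset.disjoint_left.mp hAB hx⟩)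
      hA
      (by
        rw [Finset.card_sdiff_of_subset (Finset.subset_univ B), Finset.card_univ, Fintype.card_fin]
        omega)
    exact ⟨S, hAS, Finset.disjoint_left.mpr
      (fun x hx => (Finset.mem_sdiff.mp (hSsub hx)).2), hScard⟩
  -- one-swap difference lemma
  have hdiff1 : ∀ i j : Fin n, i ≠ j →
      c' i - c' j = 0 ∨ c' i - c' j = 1 ∨ c' i - c' j = -1 := by
    intro i j hij
    obtain ⟨S, hiS, hdisj, hScard⟩ := hex {i} {j}
      (by simp [hij, hij.symm]) (by simp; omega) (by simp; omega)
    have hiS' : i ∈ S := hiS (by simp)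
    have hjS : j ∉ S := fun h => Finset.disjoint_left.mp hdisj h (by simp)
    have hjS' : j ∉ S.erase i := fun h => hjS (Finset.mem_of_mem_erase h)
    have hTcard : (insert j (S.erase i)).card = m := by
      rw [Finset.card_insert_of_notMem hjS', Finset.card_erase_of_mem hiS', hScard]
      omega
    have hTsum : ∑ k ∈ insert j (S.erase i), c' k = ∑ k ∈ S, c' k - c' i + c' j := by
      rw [Finset.sum_insert hjS', Finset.sum_erase_eq_sub hiS']
      ring
    have h1 := h01 S hScard
    have h2 := h01 _ hTcard
    rw [hTsum] at h2
    rcases h1 with h1 | h1 <;> rcases h2 with h2 | h2 <;>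
      first
      | (left; linarith)
      | (right; left; linarith)
      | (right; right; linarith)
  -- two-swap difference lemma
  have hdiff2 : ∀ i i' j j' : Fin n, i ≠ i' → j ≠ j' → i ≠ j → i ≠ j' → i' ≠ j → i' ≠ j' →
      c' i + c' i' - c' j - c' j' ≠ 2 := by
    intro i i' j j' hii' hjj' hij hij' hi'j hi'j' heq
    obtain ⟨S, hsub, hdisj, hScard⟩ := hex {i, i'} {j, j'}
      (by simp [hij.symm, hij'.symm, hi'j.symm, hi'j'.symm])
      (by rw [Finset.card_pair hii']; omega)
      (by rw [Finset.card_pair hjj']; omega)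
    have hiS : i ∈ S := hsub (by simp)
    have hi'S : i' ∈ S := hsub (by simp)
    have hjS : j ∉ S := fun h => Finset.disjoint_left.mp hdisj h (by simp)
    have hj'S : j' ∉ S := fun h => Finset.disjoint_left.mp hdisj h (by simp)
    have hi'e : i' ∈ S.erase i := Finset.mem_erase.mpr ⟨hii'.symm, hi'S⟩
    have hj'e : j' ∉ (S.erase i).erase i' :=
      fun h => hj'S (Finset.mem_of_mem_erase (Finset.mem_of_mem_erase h))
    have hje : j ∉ insert j' ((S.erase i).erase i') := by
      simp only [Finset.mem_insert]
      rintro (h | h)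
      · exact hjj' h
      · exact hjS (Finset.mem_of_mem_erase (Finset.mem_of_mem_erase h))
    have hTcard : (insert j (insert j' ((S.erase i).erase i'))).card = m := by
      rw [Finset.card_insert_of_notMem hje, Finset.card_insert_of_notMem hj'e,
        Finset.card_erase_of_mem hi'e, Finset.card_erase_of_mem hiS, hScard]
      omega
    have hTsum : ∑ k ∈ insert j (insert j' ((S.erase i).erase i')), c' k
        = ∑ k ∈ S, c' k - c' i - c' i' + c' j + c' j' := by
      rw [Finset.sum_insert hje, Finset.sum_insert hj'e,
        Finset.sum_erase_eq_sub hi'e, Finset.sum_erase_eq_sub hiS]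
      ring
    have h1 := h01 S hScard
    have h2 := h01 _ hTcard
    rw [hTsum] at h2
    rcases h1 with h1 | h1 <;> rcases h2 with h2 | h2 <;> linarith
  by_cases hconst : ∀ k l : Fin n, c' k = c' l
  · -- constant case
    have hn0 : 0 < n := by omega
    set i0 : Fin n := ⟨0, hn0⟩ with hi0
    have hsum : ∀ S : Finset (Fin n), S.card = m → ∑ k ∈ S, c' k = m * c' i0 := by
      intro S hS
      calc ∑ k ∈ S, c' k = ∑ _k ∈ S, c' i0 :=
            Finset.sum_congr rfl (fun k _ => hconst k i0)
        _ = m * c' i0 := by rw [Finset.sum_const, hS, nsmul_eq_mul]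
    by_cases hY1 : c + m * c' i0 = 1
    · right; left
      ext S
      simp only [Finset.mem_powersetCard]
      constructor
      · intro hS; exact ⟨Finset.subset_univ S, hYm S hS⟩
      · rintro ⟨-, hS⟩
        exact (hmem S hS).mpr (by rw [hsum S hS]; exact hY1)
    · left
      ext S
      simp only [Finset.notMem_empty, iff_false]
      intro hS
      have hc := (hmem S (hYm S hS)).mp hS
      rw [hsum S (hYm S hS)] at hc
      exact hY1 hc
  · push_neg at hconst
    obtain ⟨a, b, hab⟩ := hconst
    have key : ∀ i j : Fin n, c' i = c' j + 1 →
        Y = ∅ ∨ Y = Finset.powersetCard m Finset.univ ∨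
          ∃ i : Fin n,
            Y = (Finset.powersetCard m (Finset.univ : Finset (Fin n))).filter (fun S => i ∈ S) ∨
            Y = (Finset.powersetCard m (Finset.univ : Finset (Fin n))).filter (fun S => i ∉ S) := by
      intro i j hijv
      have hij : i ≠ j := fun h => by rw [h] at hijv; linarith
      by_cases hA : ∀ k, k ≠ i → c' k = c' j
      · -- i is the special element; Y = sets containing i
        have hsum : ∀ S : Finset (Fin n), S.card = m →
            ∑ k ∈ S, c' k = m * c' j + (if i ∈ S then (1:ℝ) else 0) := by
          intro S hS
          have hval : ∀ k ∈ S, c' k = c' j + (if k = i then (1:ℝ) else 0) := by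
            intro k _
            by_cases hk : k = i
            · subst hk; simp [hijv]
            · simp [hk, hA k hk]
          rw [Finset.sum_congr rfl hval, Finset.sum_add_distrib, Finset.sum_const, hS,
            nsmul_eq_mul, Finset.sum_ite_eq' S i (fun _ => (1:ℝ))]
        obtain ⟨S1, hS1i, -, hS1c⟩ := hex {i} ∅ (by simp) (by simp; omega) (by simp; omega)
        obtain ⟨S0, -, hS0d, hS0c⟩ := hex ∅ {i} (by simp) (by simp) (by simp; omega)
        have hi1 : i ∈ S1 := hS1i (by simp)
        have hi0 : i ∉ S0 := fun h => Finset.disjoint_left.mp hS0d h (by simp)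
        have h1 := h01 S1 hS1c
        rw [hsum S1 hS1c, if_pos hi1] at h1
        have h0 := h01 S0 hS0c
        rw [hsum S0 hS0c, if_neg hi0] at h0
        have hc0 : c + m * c' j = 0 := by
          rcases h0 with h0 | h0
          · linarith
          · rcases h1 with h1 | h1 <;> linarith
        right; right
        refine ⟨i, Or.inl ?_⟩
        ext S
        simp only [Finset.mem_filter, Finset.mem_powersetCard]
        constructor
        · intro hS
          have hSc := hYm S hS
          have := (hmem S hSc).mp hS
          rw [hsum S hSc] at this
          refine ⟨⟨Finset.subset_univ S, hSc⟩, ?_⟩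
          by_contra hiS
          rw [if_neg hiS] at this
          linarith
        · rintro ⟨⟨-, hSc⟩, hiS⟩
          refine (hmem S hSc).mpr ?_
          rw [hsum S hSc, if_pos hiS]
          linarith
      · push_neg at hA
        obtain ⟨k, hki, hkj⟩ := hA
        have hkj' : k ≠ j := fun h => hkj (by rw [h])
        have hk : c' k = c' i := by
          rcases hdiff1 k j hkj' with h | h | h
          · exact absurd (by linarith) hkj
          · linarith
          · rcases hdiff1 i k hki.symm with h' | h' | h' <;> linarith
        have hB : ∀ l, l ≠ j → c' l = c' i := by
          intro l hlj
          by_contra hli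
          have hli' : l ≠ i := fun h => hli (by rw [h])
          have hl : c' l = c' j := by
            rcases hdiff1 l j hlj with h | h | h
            · linarith
            · exact absurd (by linarith) hli
            · rcases hdiff1 i l hli'.symm with h' | h' | h' <;> linarith
          have hkl : k ≠ l := fun h => by rw [h, hl] at hk; linarith
          exact hdiff2 i k j l hki.symm hlj.symm hij hli'.symm hkj' hkl
            (by linarith)
        -- j is the special element; Y = sets avoiding j
        have hsum : ∀ S : Finset (Fin n), S.card = m →
            ∑ k ∈ S, c' k = m * c' i - (if j ∈ S then (1:ℝ) else 0) := by
          intro S hS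
          have hval : ∀ k ∈ S, c' k = c' i - (if k = j then (1:ℝ) else 0) := by
            intro k _
            by_cases hk : k = j
            · subst hk; simp [hijv]
            · simp [hk, hB k hk]
          rw [Finset.sum_congr rfl hval, Finset.sum_sub_distrib, Finset.sum_const, hS,
            nsmul_eq_mul, Finset.sum_ite_eq' S j (fun _ => (1:ℝ))]
        obtain ⟨S1, hS1j, -, hS1c⟩ := hex {j} ∅ (by simp) (by simp; omega) (by simp; omega)
        obtain ⟨S0, -, hS0d, hS0c⟩ := hex ∅ {j} (by simp) (by simp) (by simp; omega)
        have hj1 : j ∈ S1 := hS1j (by simp)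
        have hj0 : j ∉ S0 := fun h => Finset.disjoint_left.mp hS0d h (by simp)
        have h1 := h01 S1 hS1c
        rw [hsum S1 hS1c, if_pos hj1] at h1
        have h0 := h01 S0 hS0c
        rw [hsum S0 hS0c, if_neg hj0] at h0
        have hc1 : c + m * c' i = 1 := by
          rcases h0 with h0 | h0
          · rcases h1 with h1 | h1 <;> linarith
          · linarith
        right; right
        refine ⟨j, Or.inr ?_⟩
        ext S
        simp only [Finset.mem_filter, Finset.mem_powersetCard]
        constructor
        · intro hS
          have hSc := hYm S hS
          have := (hmem S hSc).mp hS
          rw [hsum S hSc] at this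
          refine ⟨⟨Finset.subset_univ S, hSc⟩, ?_⟩
          intro hjS
          rw [if_pos hjS] at this
          linarith
        · rintro ⟨⟨-, hSc⟩, hjS⟩
          refine (hmem S hSc).mpr ?_
          rw [hsum S hSc, if_neg hjS]
          linarith
    have hab' : a ≠ b := fun h => hab (by rw [h])
    rcases hdiff1 a b hab' with h | h | h
    · exact absurd (by linarith) hab
    · exact key a b (by linarith)
    · exact key b a (by linarith)
end

section
/- Divisibility for low degree families of m-sets: if Y is a family of m-subsets of [n] whose characteristic function has degree at most d, then gcd(C(n,m), C(n-1,m-1), ..., C(n-d,m-d)) divides |Y|. -/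
/-!
Let `g` be the gcd and first assume `m + d ≤ n`. By the theorem of Graver–Jurkat and Wilson on
integral designs there is an integer weighting `w` of the `m`-subsets of `[n]` under which every
`d`-subset has weighted degree `λ = C(n-d, m-d) / g`; its divisibility conditions
`C(m-i, d-i) ∣ C(n-i, d-i) λ` follow from `C(n-i, d-i) C(n-d, m-d) = C(n-i, m-i) C(m-i, d-i)`.
Pairing `f_Y = ∑ c_D x_D` with `w` gives `∑_{S ∈ Y} w S = λ ∑ c_D`, and pairing it with the
constant `1` gives `|Y| = C(n-d, m-d) ∑ c_D = g λ ∑ c_D`, so `|Y| = g ∑_{S ∈ Y} w S`.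
If `m + d > n` then `g = 1`, since the `r + 1` consecutive values `C(n-i, r)`, `r = n - m`,
have `r`-th difference `1`.

The design theorem is proved by induction on the ground set: deleting a point `x` splits the
problem into the link at `x` (parameters `m-1, d-1`) and the deletion of `x`. When `#V = m + d`
the inclusion matrix is square and, by Möbius inversion, injective; the rational solution is
integral because its superset sums over sets of size at most `d` are the prescribed integers.
-/

open Finset

variable {ι R : Type*} [DecidableEq ι]

def supersetSum [AddCommMonoid R] (V : Finset ι) (k : ℕ) (w : Finset ι → R) (T : Finset ι) :
    R :=
  ∑ S ∈ V.powersetCard k with T ⊆ S, w S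

section AddCommMonoid

variable [AddCommMonoid R] {V T : Finset ι} {k : ℕ}

lemma supersetSum_congr {w w' : Finset ι → R} (h : ∀ S ∈ V.powersetCard k, w S = w' S)
    (T : Finset ι) : supersetSum V k w T = supersetSum V k w' T :=
  sum_congr rfl fun S hS => h S (mem_filter.mp hS).1

lemma supersetSum_const (a : R) (hTV : T ⊆ V) (hTk : #T ≤ k) :
    supersetSum V k (fun _ => a) T = (#V - #T).choose (k - #T) • a := by
  rw [supersetSum, sum_const, card_filter_powersetCard_subset T V k hTV hTk]

lemma supersetSum_supersetSum (w : Finset ι → R) {d : ℕ} (hTd : #T ≤ d) :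
    supersetSum V d (supersetSum V k w) T
      = (k - #T).choose (d - #T) • supersetSum V k w T := by
  unfold supersetSum
  rw [sum_comm' (t' := {S ∈ V.powersetCard k | T ⊆ S})
    (s' := fun S => {D ∈ S.powersetCard d | T ⊆ D}), smul_sum]
  · refine sum_congr rfl fun S hS => ?_
    obtain ⟨hS, hTS⟩ := mem_filter.mp hS
    rw [sum_const, card_filter_powersetCard_subset T S d hTS hTd, (mem_powersetCard.mp hS).2]
  · intro D S
    simp only [mem_filter, mem_powersetCard]
    constructor
    · rintro ⟨⟨⟨-, hD⟩, hTD⟩, ⟨hSV, hS⟩, hDS⟩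
      exact ⟨⟨⟨hDS, hD⟩, hTD⟩, ⟨hSV, hS⟩, hTD.trans hDS⟩
    · rintro ⟨⟨⟨hDS, hD⟩, hTD⟩, ⟨hSV, hS⟩, -⟩
      exact ⟨⟨⟨hDS.trans hSV, hD⟩, hTD⟩, ⟨hSV, hS⟩, hDS⟩

lemma sum_powersetCard_succ_insert {x : ι} (hxV : x ∉ V) (f : Finset ι → R) :
    ∑ S ∈ (insert x V).powersetCard (k + 1), f S
      = ∑ S ∈ V.powersetCard k, f (insert x S) + ∑ S ∈ V.powersetCard (k + 1), f S := by
  rw [powersetCard_succ_insert hxV, sum_union, sum_image, add_comm]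
  · intro S hS S' hS' h
    rw [← erase_insert (fun hx => hxV ((mem_powersetCard.mp hS).1 hx)), h,
      erase_insert (fun hx => hxV ((mem_powersetCard.mp hS').1 hx))]
  · refine disjoint_left.mpr fun S hS hS' => ?_
    obtain ⟨S', -, rfl⟩ := mem_image.mp hS'
    exact hxV ((mem_powersetCard.mp hS).1 (mem_insert_self x S'))

lemma supersetSum_insert_of_notMem {x : ι} (hxV : x ∉ V) (hxT : x ∉ T) (w : Finset ι → R) :
    supersetSum (insert x V) (k + 1) w T
      = supersetSum V k (fun S => w (insert x S)) T + supersetSum V (k + 1) w T := by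
  simp only [supersetSum, sum_filter, sum_powersetCard_succ_insert hxV,
    subset_insert_iff_of_notMem hxT]

lemma supersetSum_insert_insert {x : ι} (hxV : x ∉ V) (hxT : x ∉ T) (w : Finset ι → R) :
    supersetSum (insert x V) (k + 1) w (insert x T)
      = supersetSum V k (fun S => w (insert x S)) T := by
  simp only [supersetSum, sum_filter, sum_powersetCard_succ_insert hxV,
    insert_subset_insert_iff hxT]
  rw [sum_eq_zero (s := V.powersetCard (k + 1)) fun S hS =>
    if_neg fun h => hxV ((mem_powersetCard.mp hS).1 (h (mem_insert_self x T))), add_zero]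

end AddCommMonoid

lemma supersetSum_sub [AddCommGroup R] (V : Finset ι) (k : ℕ) (w w' : Finset ι → R)
    (T : Finset ι) :
    supersetSum V k (fun S => w S - w' S) T = supersetSum V k w T - supersetSum V k w' T :=
  sum_sub_distrib ..

lemma cast_supersetSum [AddCommGroupWithOne R] (V : Finset ι) (k : ℕ) (w : Finset ι → ℤ)
    (T : Finset ι) : ((supersetSum V k w T : ℤ) : R) = supersetSum V k (fun S => (w S : R)) T :=
  Int.cast_sum ..

lemma card_le_of_mem_powerset_sdiff {V S B : Finset ι} {m d : ℕ} (hV : #V ≤ m + d)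
    (hS : S ∈ V.powersetCard m) (hB : B ∈ (V \ S).powerset) : #B ≤ d := by
  obtain ⟨hSV, hS⟩ := mem_powersetCard.mp hS
  have := card_le_card (mem_powerset.mp hB)
  rw [card_sdiff_of_subset hSV] at this
  omega

lemma sum_powerset_sdiff_supersetSum [CommRing R] {V S₀ : Finset ι} {k : ℕ}
    (hS₀ : S₀ ∈ V.powersetCard k) (w : Finset ι → R) :
    ∑ B ∈ (V \ S₀).powerset, (-1 : R) ^ #B * supersetSum V k w B = w S₀ := by
  unfold supersetSum
  simp_rw [mul_sum]
  rw [sum_comm' (t' := V.powersetCard k) (s' := fun S => (S \ S₀).powerset)]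
  · have hS : ∀ S ∈ V.powersetCard k, ∑ B ∈ (S \ S₀).powerset, (-1 : R) ^ #B * w S
        = if S = S₀ then w S else 0 := by
      intro S hS
      have hsum := congrArg (Int.cast : ℤ → R) (sum_powerset_neg_one_pow_card (x := S \ S₀))
      push_cast at hsum
      simp only [sdiff_eq_empty_iff_subset,
        subset_iff_eq_of_card_le
          ((mem_powersetCard.mp hS₀).2.trans (mem_powersetCard.mp hS).2.symm).le] at hsum
      rw [← sum_mul, hsum, ite_mul, one_mul, zero_mul]
    rw [sum_congr rfl hS, sum_ite_eq' _ _ _, if_pos hS₀]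
  · intro B S
    simp only [mem_filter, mem_powersetCard, mem_powerset, subset_sdiff]
    constructor
    · rintro ⟨⟨hBV, hBS₀⟩, ⟨hSV, hS⟩, hBS⟩
      exact ⟨⟨hBS, hBS₀⟩, hSV, hS⟩
    · rintro ⟨⟨hBS, hBS₀⟩, hSV, hS⟩
      exact ⟨⟨hBS.trans hSV, hBS₀⟩, ⟨hSV, hS⟩, hBS⟩

section Field

variable {K : Type*} [Field K] [CharZero K] {V : Finset ι} {m d : ℕ}

lemma supersetSum_eq_div_choose (hdm : d ≤ m) {w ψ : Finset ι → K}
    (h : ∀ D ∈ V.powersetCard d, supersetSum V m w D = ψ D) {T : Finset ι} (hTd : #T ≤ d) :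
    supersetSum V m w T = supersetSum V d ψ T / (m - #T).choose (d - #T) := by
  have hC : ((m - #T).choose (d - #T) : K) ≠ 0 :=
    Nat.cast_ne_zero.mpr (Nat.choose_pos (by omega)).ne'
  rw [eq_div_iff hC, ← supersetSum_congr h, supersetSum_supersetSum w hTd, nsmul_eq_mul,
    mul_comm]

lemma eq_zero_of_supersetSum_eq_zero (hdm : d ≤ m) (hV : #V ≤ m + d) {w : Finset ι → K}
    (h : ∀ D ∈ V.powersetCard d, supersetSum V m w D = 0) {S : Finset ι}
    (hS : S ∈ V.powersetCard m) : w S = 0 := by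
  rw [← sum_powerset_sdiff_supersetSum hS w]
  refine sum_eq_zero fun B hB => ?_
  rw [supersetSum_eq_div_choose hdm (ψ := 0) h (card_le_of_mem_powerset_sdiff hV hS hB)]
  simp [supersetSum]

lemma exists_supersetSum_eq_of_card_eq (hdm : d ≤ m) (hV : #V = m + d) (ψ : Finset ι → K) :
    ∃ w : Finset ι → K, ∀ D ∈ V.powersetCard d, supersetSum V m w D = ψ D := by
  let ext : (V.powersetCard m → K) → Finset ι → K :=
    fun u S => if h : S ∈ V.powersetCard m then u ⟨S, h⟩ else 0
  let M : Matrix (V.powersetCard d) (V.powersetCard m) K :=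
    Matrix.of fun D S => if D.1 ⊆ S.1 then 1 else 0
  have hM : ∀ u D, M.mulVecLin u D = supersetSum V m (ext u) D := by
    intro u D
    simp only [Matrix.mulVecLin_apply, Matrix.mulVec, dotProduct, M, Matrix.of_apply, ite_mul,
      one_mul, zero_mul]
    rw [supersetSum, sum_filter,
      ← sum_coe_sort (V.powersetCard m) fun S => if D.1 ⊆ S then ext u S else 0]
    exact sum_congr rfl fun S _ => by simp only [ext, dif_pos S.2]
  have hinj : Function.Injective M.mulVecLin := by
    refine (injective_iff_map_eq_zero _).mpr fun u hu => funext fun S => ?_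
    have := eq_zero_of_supersetSum_eq_zero hdm hV.le (w := ext u)
      (fun D hD => by rw [← hM u ⟨D, hD⟩, hu, Pi.zero_apply]) S.2
    simpa only [ext, dif_pos S.2, Subtype.coe_eta, Pi.zero_apply] using this
  have hdim :
      Module.finrank K (V.powersetCard m → K) = Module.finrank K (V.powersetCard d → K) := by
    simpa [hV] using Nat.choose_symm_add
  obtain ⟨u, hu⟩ :=
    (LinearMap.injective_iff_surjective_of_finrank_eq_finrank hdim).mp hinj fun D => ψ D
  exact ⟨ext u, fun D hD => by rw [← hM u ⟨D, hD⟩, hu]⟩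

end Field

/-- The conditions `φ` must satisfy to be the `d`-degrees of an integer weighting of `m`-sets,
by `supersetSum_supersetSum`. -/
def DivisibilityCondition (V : Finset ι) (m d : ℕ) (φ : Finset ι → ℤ) : Prop :=
  ∀ T ⊆ V, #T ≤ d → ((m - #T).choose (d - #T) : ℤ) ∣ supersetSum V d φ T

lemma exists_int_supersetSum_eq_of_card_eq {V : Finset ι} {m d : ℕ} (hdm : d ≤ m)
    (hV : #V = m + d) {φ : Finset ι → ℤ} (hφ : DivisibilityCondition V m d φ) :
    ∃ w : Finset ι → ℤ, ∀ D ∈ V.powersetCard d, supersetSum V m w D = φ D := by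
  obtain ⟨w, hw⟩ := exists_supersetSum_eq_of_card_eq (K := ℚ) hdm hV fun D => φ D
  let t : Finset ι → ℤ := fun T => supersetSum V d φ T / (m - #T).choose (d - #T)
  have ht : ∀ T ⊆ V, #T ≤ d → supersetSum V m w T = t T := by
    intro T hTV hTd
    rw [supersetSum_eq_div_choose hdm hw hTd, Int.cast_div (hφ T hTV hTd)
      (Int.cast_ne_zero.mpr (Int.natCast_ne_zero.mpr (Nat.choose_pos (by omega)).ne'))]
    rw [cast_supersetSum, Int.cast_natCast]
  have hw' : ∀ S ∈ V.powersetCard m,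
      ((∑ B ∈ (V \ S).powerset, (-1) ^ #B * t B : ℤ) : ℚ) = w S := by
    intro S hS
    rw [← sum_powerset_sdiff_supersetSum hS w]
    push_cast
    refine sum_congr rfl fun B hB => ?_
    rw [ht B ((mem_powerset.mp hB).trans sdiff_subset)
      (card_le_of_mem_powerset_sdiff hV.le hS hB)]
  refine ⟨fun S => ∑ B ∈ (V \ S).powerset, (-1) ^ #B * t B, fun D hD => ?_⟩
  have := (supersetSum_congr hw' D).trans (hw D hD)
  rw [← cast_supersetSum] at this
  exact_mod_cast this

lemma exists_supersetSum_zero_eq [AddCommMonoid R] {V : Finset ι} {m : ℕ} (hm : m ≤ #V)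
    (φ : Finset ι → R) :
    ∃ w : Finset ι → R, ∀ D ∈ V.powersetCard 0, supersetSum V m w D = φ D := by
  obtain ⟨S₀, hS₀V, hS₀⟩ := exists_subset_card_eq hm
  refine ⟨fun S => if S = S₀ then φ ∅ else 0, fun D hD => ?_⟩
  rw [powersetCard_zero, mem_singleton] at hD
  subst hD
  rw [supersetSum, filter_true_of_mem fun S _ => empty_subset S, sum_ite_eq',
    if_pos (mem_powersetCard.mpr ⟨hS₀V, hS₀⟩)]

namespace DivisibilityCondition

variable {V : Finset ι} {x : ι} {m d : ℕ} {φ : Finset ι → ℤ}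

lemma link (hxV : x ∉ V) (h : DivisibilityCondition (insert x V) (m + 1) (d + 1) φ) :
    DivisibilityCondition V m d fun D => φ (insert x D) := by
  intro T hTV hTd
  have hxT : x ∉ T := fun hx => hxV (hTV hx)
  have := h (insert x T) (insert_subset_insert x hTV) (by rw [card_insert_of_notMem hxT]; omega)
  rwa [card_insert_of_notMem hxT, supersetSum_insert_insert hxV hxT, Nat.add_sub_add_right,
    Nat.add_sub_add_right] at this

lemma delete (hxV : x ∉ V) (hdm : d ≤ m)
    (h : DivisibilityCondition (insert x V) (m + 1) (d + 1) φ) {w₁ : Finset ι → ℤ}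
    (hw₁ : ∀ D ∈ V.powersetCard d, supersetSum V m w₁ D = φ (insert x D)) :
    DivisibilityCondition V (m + 1) (d + 1) fun D => φ D - supersetSum V m w₁ D := by
  intro T hTV hTd
  rcases hTd.eq_or_lt with hTd | hTd
  · rw [hTd, Nat.sub_self, Nat.choose_zero_right, Nat.cast_one]
    exact one_dvd _
  have hxT : x ∉ T := fun hx => hxV (hTV hx)
  obtain ⟨q, hq⟩ := h T (hTV.trans (subset_insert x V)) hTd.le
  rw [supersetSum_insert_of_notMem hxV hxT, ← supersetSum_congr hw₁,
    supersetSum_supersetSum w₁ (Nat.le_of_lt_succ hTd)] at hq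
  rw [supersetSum_sub, supersetSum_supersetSum w₁ hTd.le]
  have hpascal : ((m + 1 - #T).choose (d + 1 - #T) : ℤ)
      = (m - #T).choose (d - #T) + (m - #T).choose (d + 1 - #T) := by
    rw [show m + 1 - #T = m - #T + 1 by omega, show d + 1 - #T = d - #T + 1 by omega,
      Nat.choose_succ_succ']
    push_cast
    ring
  rw [hpascal, nsmul_eq_mul] at hq ⊢
  exact ⟨q - supersetSum V m w₁ T, by linear_combination hq⟩

end DivisibilityCondition

lemma supersetSum_ite_mem_eq [AddCommGroup R] {V : Finset ι} {x : ι} (hxV : x ∉ V) {m d : ℕ}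
    {φ w₁ w₀ : Finset ι → R}
    (hw₁ : ∀ D ∈ V.powersetCard d, supersetSum V m w₁ D = φ (insert x D))
    (hw₀ : ∀ D ∈ V.powersetCard (d + 1),
      supersetSum V (m + 1) w₀ D = φ D - supersetSum V m w₁ D)
    {D : Finset ι} (hD : D ∈ (insert x V).powersetCard (d + 1)) :
    supersetSum (insert x V) (m + 1) (fun S => if x ∈ S then w₁ (S.erase x) else w₀ S) D
      = φ D := by
  set w := fun S => if x ∈ S then w₁ (S.erase x) else w₀ S
  have h₁ : ∀ S ∈ V.powersetCard m, w (insert x S) = w₁ S := fun S hS => by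
    simp only [w, if_pos (mem_insert_self x S),
      erase_insert fun hx => hxV ((mem_powersetCard.mp hS).1 hx)]
  have h₀ : ∀ S ∈ V.powersetCard (m + 1), w S = w₀ S :=
    fun S hS => if_neg fun hx => hxV ((mem_powersetCard.mp hS).1 hx)
  obtain ⟨hDV, hD⟩ := mem_powersetCard.mp hD
  by_cases hxD : x ∈ D
  · obtain ⟨D', hxD', rfl⟩ : ∃ D', x ∉ D' ∧ D = insert x D' :=
      ⟨D.erase x, notMem_erase x D, (insert_erase hxD).symm⟩
    rw [card_insert_of_notMem hxD'] at hD
    rw [supersetSum_insert_insert hxV hxD', supersetSum_congr h₁,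
      hw₁ D' (mem_powersetCard.mpr ⟨(insert_subset_insert_iff hxD').mp hDV, by omega⟩)]
  · rw [supersetSum_insert_of_notMem hxV hxD, supersetSum_congr h₁, supersetSum_congr h₀,
      hw₀ D (mem_powersetCard.mpr ⟨(subset_insert_iff_of_notMem hxD).mp hDV, hD⟩)]
    abel

theorem exists_supersetSum_eq {V : Finset ι} {m d : ℕ} (hdm : d ≤ m) (hmd : m + d ≤ #V)
    {φ : Finset ι → ℤ} (hφ : DivisibilityCondition V m d φ) :
    ∃ w : Finset ι → ℤ, ∀ D ∈ V.powersetCard d, supersetSum V m w D = φ D := by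
  induction V using Finset.induction_on generalizing m d φ with
  | empty => exact exists_int_supersetSum_eq_of_card_eq hdm (by simp at hmd ⊢; omega) hφ
  | @insert x V hxV ih =>
    rw [card_insert_of_notMem hxV] at hmd
    rcases hmd.eq_or_lt with hmd | hmd
    · exact exists_int_supersetSum_eq_of_card_eq hdm (by rw [card_insert_of_notMem hxV, hmd]) hφ
    obtain _ | d := d
    · exact exists_supersetSum_zero_eq (by rw [card_insert_of_notMem hxV]; omega) φ
    obtain _ | m := m
    · omega
    obtain ⟨w₁, hw₁⟩ := ih (by omega) (by omega) (hφ.link hxV)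
    obtain ⟨w₀, hw₀⟩ := ih hdm (by omega) (hφ.delete hxV (by omega) hw₁)
    exact ⟨_, fun D hD => supersetSum_ite_mem_eq hxV hw₁ hw₀ hD⟩

lemma sum_mul_eq_of_supersetSum_eq [CommSemiring R] {V : Finset ι} {m d : ℕ}
    {F c w : Finset ι → R} {a : R}
    (hF : ∀ S ∈ V.powersetCard m,
      F S = ∑ D ∈ V.powersetCard d, c D * if D ⊆ S then 1 else 0)
    (hw : ∀ D ∈ V.powersetCard d, supersetSum V m w D = a) :
    ∑ S ∈ V.powersetCard m, F S * w S = a * ∑ D ∈ V.powersetCard d, c D := calc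
  _ = ∑ D ∈ V.powersetCard d, c D * supersetSum V m w D := by
    simp_rw [supersetSum, sum_filter, mul_sum]
    rw [sum_congr rfl fun S hS => by rw [hF S hS, sum_mul], sum_comm]
    exact sum_congr rfl fun D _ => sum_congr rfl fun S _ => by split_ifs <;> simp
  _ = a * ∑ D ∈ V.powersetCard d, c D := by
    rw [mul_sum]
    exact sum_congr rfl fun D hD => by rw [hw D hD, mul_comm]

lemma card_eq_mul_sum_of_supersetSum_eq {V : Finset ι} {m d g lam : ℕ} (hdm : d ≤ m)
    {Y : Finset (Finset ι)} (hY : Y ⊆ V.powersetCard m) {c : Finset ι → ℝ}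
    (hdeg : ∀ S ∈ V.powersetCard m,
      (if S ∈ Y then (1 : ℝ) else 0) = ∑ D ∈ V.powersetCard d, c D * if D ⊆ S then 1 else 0)
    {w : Finset ι → ℤ} (hw : ∀ D ∈ V.powersetCard d, supersetSum V m w D = lam)
    (hC : (#V - d).choose (m - d) = g * lam) :
    (#Y : ℤ) = g * ∑ S ∈ Y, w S := by
  have hpair : ∀ a : Finset ι → ℝ,
      ∑ S ∈ V.powersetCard m, (if S ∈ Y then (1 : ℝ) else 0) * a S = ∑ S ∈ Y, a S := by
    intro a
    simp_rw [boole_mul]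
    rw [sum_ite_mem, inter_eq_right.mpr hY]
  have hcard : (#Y : ℝ) = (#V - d).choose (m - d) * ∑ D ∈ V.powersetCard d, c D := by
    rw [card_eq_sum_ones, Nat.cast_sum, Nat.cast_one, ← hpair,
      sum_mul_eq_of_supersetSum_eq hdeg]
    intro D hD
    obtain ⟨hDV, hD⟩ := mem_powersetCard.mp hD
    rw [supersetSum_const _ hDV (by omega), hD, nsmul_eq_mul, mul_one]
  have hsum : ((∑ S ∈ Y, w S : ℤ) : ℝ) = lam * ∑ D ∈ V.powersetCard d, c D := by
    rw [Int.cast_sum, ← hpair, sum_mul_eq_of_supersetSum_eq hdeg]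
    intro D hD
    rw [← cast_supersetSum, hw D hD, Int.cast_natCast]
  have : (#Y : ℝ) = g * ((∑ S ∈ Y, w S : ℤ) : ℝ) := by
    rw [hcard, hsum, hC]
    push_cast
    ring
  exact_mod_cast this

lemma choose_dvd_choose_mul_choose_div {n m d i g : ℕ} (hid : i ≤ d) (hdm : d ≤ m)
    (hgi : g ∣ (n - i).choose (m - i)) (hgd : g ∣ (n - d).choose (m - d)) :
    (m - i).choose (d - i) ∣ (n - i).choose (d - i) * ((n - d).choose (m - d) / g) := by
  have key := Nat.choose_mul (n := n - i) (k := m - i) (s := d - i) (by omega)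
  rw [Nat.sub_sub_sub_cancel_right hid, Nat.sub_sub_sub_cancel_right hid] at key
  rw [← Nat.mul_div_assoc _ hgd, ← key, Nat.mul_comm ((n - i).choose (m - i)),
    Nat.mul_div_assoc _ hgi]
  exact dvd_mul_right _ _

lemma dvd_one_of_dvd_choose_sub {g r x : ℕ} (hrx : r ≤ x)
    (h : ∀ i ≤ r, g ∣ (x - i).choose r) : g ∣ 1 := by
  induction r generalizing x with
  | zero => simpa using h 0 le_rfl
  | succ r ih =>
    refine ih (x := x - 1) (by omega) fun i hi => ?_
    have h₁ := h i (by omega)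
    have h₂ := h (i + 1) (by omega)
    rw [show x - i = x - 1 - i + 1 by omega, Nat.choose_succ_succ'] at h₁
    rw [show x - (i + 1) = x - 1 - i by omega] at h₂
    exact (Nat.dvd_add_left h₂).mp h₁

/-- Divisibility condition: if `Y` is a family of `m`-subsets of `[n]` whose characteristic
function has degree at most `d`, then `gcd(C(n,m), C(n-1,m-1), …, C(n-d,m-d))` divides `|Y|`. -/
theorem stmt_16 (n m d : ℕ) (hd : d ≤ m) (hm : m ≤ n)
    (Y : Finset (Finset (Fin n))) (hYm : ∀ S ∈ Y, S.card = m)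
    (c : Finset (Fin n) → ℝ)
    (hdeg : ∀ S : Finset (Fin n), S.card = m →
      (if S ∈ Y then (1 : ℝ) else 0) =
        ∑ D ∈ Finset.powersetCard d Finset.univ, c D * (if D ⊆ S then 1 else 0)) :
    ((Finset.range (d + 1)).gcd fun i => (n - i).choose (m - i)) ∣ Y.card := by
  set g := (range (d + 1)).gcd fun i => (n - i).choose (m - i)
  have hg : ∀ i ≤ d, g ∣ (n - i).choose (m - i) :=
    fun i hi => gcd_dvd (mem_range.mpr (by omega))
  rcases lt_or_ge n (m + d) with hn | hn
  · refine (dvd_one_of_dvd_choose_sub (x := n) (r := n - m) (by omega) fun i hi => ?_).trans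
      (one_dvd _)
    rw [show n - m = n - i - (m - i) by omega, Nat.choose_symm (by omega)]
    exact hg i (by omega)
  set lam := (n - d).choose (m - d) / g
  have hglam : g * lam = (n - d).choose (m - d) := Nat.mul_div_cancel' (hg d le_rfl)
  obtain ⟨w, hw⟩ := exists_supersetSum_eq (V := (univ : Finset (Fin n))) hd
    (by simpa using hn) (φ := fun _ => (lam : ℤ)) fun T _ hTd => by
      rw [supersetSum_const _ (subset_univ T) hTd, card_univ, Fintype.card_fin, nsmul_eq_mul]
      exact_mod_cast choose_dvd_choose_mul_choose_div hTd hd (hg _ hTd) (hg d le_rfl)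
  have hYg := card_eq_mul_sum_of_supersetSum_eq hd
    (fun S hS => mem_powersetCard.mpr ⟨subset_univ S, hYm S hS⟩)
    (fun S hS => hdeg S (mem_powersetCard.mp hS).2) hw (by simpa using hglam.symm)
  exact Int.natCast_dvd_natCast.mp ⟨_, hYg⟩
end

section
/- For the recursively defined Boolean functions H_d with H_2(x_1,x_2,x_3,x_4) = x_1 ⊕ x_2 ⊕ (x_1 ⊕ x_3)(x_2 ⊕ x_4) and H_d(x_1,x_2,y,z) = x_1 ⊕ (x_1 ⊕ x_2 ⊕ 1)·H_{d-1}(y) ⊕ (x_1 ⊕ x_2)·H_{d-1}(z) (where y and z are disjoint blocks of variables), the function H_d has 3·2^{d-1} - 2 input variables and polynomial degree exactly d for every d ≥ 2. -/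
/-- Number of variables of the Tarannikov function `H_d`: `3·2^{d-1} - 2`. -/
def hammN (d : ℕ) : ℕ := 3 * 2 ^ (d - 1) - 2

/-- The recursively defined Boolean functions: `H_2(x₁,x₂,x₃,x₄) = x₁ ⊕ x₂ ⊕ (x₁⊕x₃)(x₂⊕x₄)`
and `H_d(x₁,x₂,y,z) = x₁ ⊕ (x₁⊕x₂⊕1)·H_{d-1}(y) ⊕ (x₁⊕x₂)·H_{d-1}(z)` with `y, z` disjoint
blocks of `3·2^{d-2} - 2` fresh variables each. -/
def tarH : ℕ → (ℕ → Bool) → Bool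
  | 0, _ => false
  | 1, x => x 0
  | 2, x => xor (x 0) (xor (x 1) ((xor (x 0) (x 2)) && (xor (x 1) (x 3))))
  | (d + 3), x =>
      xor (x 0)
        (xor ((!(xor (x 0) (x 1))) && tarH (d + 2) (fun i => x (i + 2)))
             ((xor (x 0) (x 1)) && tarH (d + 2) (fun i => x (2 + hammN (d + 2) + i))))

/-- The real value of a Boolean. -/
def b2r (b : Bool) : ℝ := if b then 1 else 0

/-!
Degrees are detected by discrete derivatives: `cubeDeriv S F x` is the alternating sum of `F`
over the subcube at `x` spanned by the directions `S`. A function of the variables in `s` is the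
multilinear polynomial with coefficients `cubeDeriv S F 0`, `S ⊆ s` (Möbius inversion), and a
multilinear polynomial of degree `≤ k` has vanishing derivatives of every order `> k`.

In real form `H_{d+1} = x₀ + (1 - x₀ - x₁) H_d(y) + (x₁ - x₀) H_d(z)`, each product pairing a
degree-one factor with a copy of `H_d` on disjoint variables, so the product rule for derivatives
gives degree `≤ d + 1`. Conversely, if the derivative of `H_d` in the directions `S` is nonzero,
so is the derivative of `H_{d+1}` in the directions `S` moved into the block `y` (or `z`) together
with `x₀` or `x₁`: only the summand through that block survives, with the factor `-1` coming from
its affine coefficient. Starting from `H_2` this gives nonzero derivatives of order `d` through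
every variable, hence both the lower bound on the degree and the relevance of every variable.
-/

open Finset Function

theorem DependsOn.mul {ι α M : Type*} [Mul M] {F G : (ι → α) → M} {s t : Set ι}
    (hF : DependsOn F s) (hG : DependsOn G t) : DependsOn (F * G) (s ∪ t) := fun _ _ h =>
  congr_arg₂ (· * ·) (hF fun i hi => h i (Or.inl hi)) (hG fun i hi => h i (Or.inr hi))

theorem DependsOn.precomp {ι κ α β : Type*} [DecidableEq κ] {F : (ι → α) → β} {s : Finset ι}
    (hF : DependsOn F s) (g : ι → κ) : DependsOn (fun y : κ → α => F (y ∘ g)) (s.image g) :=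
  fun _ _ h => hF fun i hi => h (g i) (mem_image_of_mem g hi)

section CubeDeriv

variable {ι κ R : Type*} [DecidableEq ι] [DecidableEq κ] [CommRing R]

def cubeDeriv (S : Finset ι) : ((ι → Bool) → R) →ₗ[R] ((ι → Bool) → R) where
  toFun F x := ∑ T ∈ S.powerset, (-1) ^ #(S \ T) * F (S.piecewise (fun i => decide (i ∈ T)) x)
  map_add' F G := by ext x; simp [mul_add, sum_add_distrib]
  map_smul' c F := by ext x; simp [mul_sum, mul_left_comm]

theorem cubeDeriv_apply (S : Finset ι) (F : (ι → Bool) → R) (x : ι → Bool) :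
    cubeDeriv S F x =
      ∑ T ∈ S.powerset, (-1) ^ #(S \ T) * F (S.piecewise (fun i => decide (i ∈ T)) x) :=
  rfl

@[simp]
theorem cubeDeriv_empty (F : (ι → Bool) → R) : cubeDeriv ∅ F = F := by
  ext x
  simp [cubeDeriv_apply]

theorem cubeDeriv_insert {j : ι} {S : Finset ι} (hj : j ∉ S) (F : (ι → Bool) → R)
    (x : ι → Bool) :
    cubeDeriv (insert j S) F x =
      cubeDeriv S F (update x j true) - cubeDeriv S F (update x j false) := by
  rw [cubeDeriv_apply, sum_powerset_insert hj, cubeDeriv_apply, cubeDeriv_apply,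
    sub_eq_neg_add, ← sum_neg_distrib]
  congr 1 <;> refine sum_congr rfl fun T hT => ?_
  · have hjT : j ∉ T := fun h => hj (mem_powerset.1 hT h)
    have hpw : (insert j S).piecewise (fun i => decide (i ∈ T)) x =
        S.piecewise (fun i => decide (i ∈ T)) (update x j false) := by
      ext i; by_cases hi : i = j <;> by_cases hiS : i ∈ S <;> simp_all [piecewise]
    rw [insert_sdiff_of_notMem _ hjT, card_insert_of_notMem (by simp [hj]), pow_succ, hpw]
    ring
  · have hpw : (insert j S).piecewise (fun i => decide (i ∈ insert j T)) x =
        S.piecewise (fun i => decide (i ∈ T)) (update x j true) := by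
      ext i
      by_cases hi : i = j
      · subst hi; simp [piecewise, hj]
      · by_cases hiS : i ∈ S <;> simp [piecewise, hi, hiS]
    rw [insert_sdiff_insert, sdiff_insert_of_notMem hj, hpw]

theorem cubeDeriv_singleton (j : ι) (F : (ι → Bool) → R) (x : ι → Bool) :
    cubeDeriv {j} F x = F (update x j true) - F (update x j false) := by
  simpa using cubeDeriv_insert (notMem_empty j) F x

theorem DependsOn.cubeDeriv {F : (ι → Bool) → R} {s : Set ι} (hF : DependsOn F s)
    (S : Finset ι) : DependsOn (cubeDeriv S F) s := by
  intro x y hxy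
  refine sum_congr rfl fun T _ => congrArg _ (hF ?_)
  intro i hi
  by_cases hiS : i ∈ S <;> simp [hiS, hxy i hi]

theorem cubeDeriv_update_of_notMem {F : (ι → Bool) → R} {s : Set ι} (hF : DependsOn F s)
    {j : ι} (hj : j ∉ s) (S : Finset ι) (x : ι → Bool) (b : Bool) :
    cubeDeriv S F (update x j b) = cubeDeriv S F x :=
  hF.cubeDeriv S fun _ hi => update_of_ne (ne_of_mem_of_not_mem hi hj) _ _

theorem cubeDeriv_eq_zero_of_dependsOn {F : (ι → Bool) → R} {s : Set ι} (hF : DependsOn F s)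
    {j : ι} {S : Finset ι} (hjS : j ∈ S) (hjs : j ∉ s) (x : ι → Bool) :
    cubeDeriv S F x = 0 := by
  rw [← insert_erase hjS, cubeDeriv_insert (notMem_erase j S),
    cubeDeriv_update_of_notMem hF hjs, cubeDeriv_update_of_notMem hF hjs, sub_self]

theorem cubeDeriv_comp_update {j : ι} {S : Finset ι} (hj : j ∉ S) (b : Bool)
    (F : (ι → Bool) → R) (x : ι → Bool) :
    cubeDeriv S (fun y => F (update y j b)) x = cubeDeriv S F (update x j b) := by
  refine sum_congr rfl fun T _ => ?_
  dsimp only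
  rw [update_piecewise_of_notMem _ _ _ hj]

theorem cubeDeriv_mul {F G : (ι → Bool) → R} {P Q : Finset ι} (hF : DependsOn F P)
    (hG : DependsOn G Q) (hPQ : Disjoint P Q) {S : Finset ι} (hS : S ⊆ P ∪ Q)
    (x : ι → Bool) :
    cubeDeriv S (F * G) x = cubeDeriv (S ∩ P) F x * cubeDeriv (S ∩ Q) G x := by
  induction S using Finset.induction_on generalizing x with
  | empty => simp
  | insert j S hj ih =>
    obtain ⟨hjPQ, hS⟩ := insert_subset_iff.1 hS
    rw [cubeDeriv_insert hj, ih hS, ih hS]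
    rcases mem_union.1 hjPQ with hjP | hjQ
    · have hjQ : j ∉ (Q : Set ι) := disjoint_left.1 hPQ hjP
      rw [insert_inter_of_mem hjP, insert_inter_of_notMem (mem_coe.not.1 hjQ),
        cubeDeriv_insert (fun h => hj (mem_inter.1 h).1),
        cubeDeriv_update_of_notMem hG hjQ, cubeDeriv_update_of_notMem hG hjQ, sub_mul]
    · have hjP : j ∉ (P : Set ι) := disjoint_right.1 hPQ hjQ
      rw [insert_inter_of_mem hjQ, insert_inter_of_notMem (mem_coe.not.1 hjP),
        cubeDeriv_insert (fun h => hj (mem_inter.1 h).1),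
        cubeDeriv_update_of_notMem hF hjP, cubeDeriv_update_of_notMem hF hjP, mul_sub]

theorem cubeDeriv_image_comp {g : ι → κ} (hg : Injective g) (S : Finset ι) (F : (ι → Bool) → R)
    (x : κ → Bool) :
    cubeDeriv (S.image g) (fun y => F (y ∘ g)) x = cubeDeriv S F (x ∘ g) := by
  rw [cubeDeriv_apply, powerset_image, sum_image fun _ _ _ _ h => image_injective hg h]
  refine sum_congr rfl fun T _ => ?_
  rw [← image_sdiff _ _ hg, card_image_of_injective _ hg]
  congr 2
  ext i
  by_cases hiS : i ∈ S <;> simp [piecewise, hg.eq_iff, hiS]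

/-- For a function of finitely many variables, membership means that its multilinear polynomial
has degree at most `k`. -/
def degreeLE (k : ℕ) : Submodule R ((ι → Bool) → R) :=
  ⨅ (S : Finset ι) (_ : k < #S), LinearMap.ker (cubeDeriv S)

theorem mem_degreeLE {k : ℕ} {F : (ι → Bool) → R} :
    F ∈ degreeLE k ↔ ∀ S : Finset ι, k < #S → ∀ x, cubeDeriv S F x = 0 := by
  simp [degreeLE, funext_iff]

theorem degreeLE_mono {a b : ℕ} (hab : a ≤ b) : degreeLE (ι := ι) (R := R) a ≤ degreeLE b :=
  fun _ hF => mem_degreeLE.2 fun S hS => mem_degreeLE.1 hF S (hab.trans_lt hS)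

theorem mem_degreeLE_of_dependsOn {F : (ι → Bool) → R} {s : Finset ι} (hF : DependsOn F s) :
    F ∈ degreeLE #s := by
  refine mem_degreeLE.2 fun S hS x => ?_
  obtain ⟨j, hjS, hjs⟩ := exists_mem_notMem_of_card_lt_card hS
  exact cubeDeriv_eq_zero_of_dependsOn hF hjS (mem_coe.not.2 hjs) x

theorem mul_mem_degreeLE {F G : (ι → Bool) → R} {a b : ℕ} {P Q : Finset ι}
    (hF : F ∈ degreeLE a) (hG : G ∈ degreeLE b) (hFP : DependsOn F P) (hGQ : DependsOn G Q)
    (hPQ : Disjoint P Q) : F * G ∈ degreeLE (a + b) := by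
  refine mem_degreeLE.2 fun S hS x => ?_
  by_cases hSPQ : S ⊆ P ∪ Q
  · have hcard : #(S ∩ P) + #(S ∩ Q) = #S := by
      rw [← card_union_of_disjoint (disjoint_of_subset_left inter_subset_right
        (disjoint_of_subset_right inter_subset_right hPQ)), ← inter_union_distrib_left,
        inter_eq_left.2 hSPQ]
    rw [cubeDeriv_mul hFP hGQ hPQ hSPQ]
    rcases lt_or_lt_of_add_lt_add (hcard ▸ hS : a + b < #(S ∩ P) + #(S ∩ Q)) with h | h
    · rw [mem_degreeLE.1 hF _ h, zero_mul]
    · rw [mem_degreeLE.1 hG _ h, mul_zero]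
  · obtain ⟨j, hjS, hj⟩ := not_subset.1 hSPQ
    exact cubeDeriv_eq_zero_of_dependsOn (hFP.mul hGQ) hjS (by simpa using hj) x

theorem comp_mem_degreeLE {g : ι → κ} (hg : Injective g) {F : (ι → Bool) → R} {k : ℕ}
    (hF : F ∈ degreeLE k) : (fun y : κ → Bool => F (y ∘ g)) ∈ degreeLE k := by
  refine mem_degreeLE.2 fun S hS x => ?_
  by_cases hSg : (S : Set κ) ⊆ Set.range g
  · rw [← Set.image_univ] at hSg
    obtain ⟨S', -, rfl⟩ := subset_set_image_iff.1 hSg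
    rw [cubeDeriv_image_comp hg]
    exact mem_degreeLE.1 hF S' (card_image_of_injective S' hg ▸ hS) _
  · obtain ⟨j, hjS, hj⟩ := Set.not_subset.1 hSg
    exact cubeDeriv_eq_zero_of_dependsOn (s := Set.range g)
      (fun y z hyz => congrArg F (funext fun i => hyz (g i) ⟨i, rfl⟩)) hjS hj x

end CubeDeriv

section Multilinear

variable {ι : Type*} [DecidableEq ι]

theorem eq_sum_cubeDeriv_mul_prod {s : Finset ι} {F : (ι → Bool) → ℝ} (hF : DependsOn F s)
    (x : ι → Bool) :
    F x = ∑ S ∈ s.powerset, cubeDeriv S F (fun _ => false) * ∏ i ∈ S, b2r (x i) := by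
  induction s using Finset.induction_on generalizing F with
  | empty =>
    rw [coe_empty] at hF
    simpa using hF.empty x (fun _ => false)
  | insert j s hj ih =>
    set F₀ : (ι → Bool) → ℝ := fun y => F (update y j false)
    set D : (ι → Bool) → ℝ := (fun y => F (update y j true)) - F₀
    have hdep (b : Bool) : DependsOn (fun y => F (update y j b)) s := fun y z hyz => by
      refine hF fun i hi => ?_
      by_cases hij : i = j
      · simp [hij]
      · simp [update_of_ne hij, hyz i (by simpa [hij] using hi)]
    have hD : DependsOn D s := fun y z hyz => by simp [D, F₀, hdep true hyz, hdep false hyz]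
    have hsplit : F x = F₀ x + b2r (x j) * D x := by
      cases hxj : x j <;> simp [F₀, D, b2r, ← hxj]
    have hjS {S : Finset ι} (hS : S ∈ s.powerset) : j ∉ S := fun h => hj (mem_powerset.1 hS h)
    have h0 : update (fun _ : ι => false) j false = fun _ => false := update_eq_self j _
    rw [hsplit, ih (F := F₀) (hdep false), ih hD, sum_powerset_insert hj, mul_sum]
    congr 1 <;> refine sum_congr rfl fun S hS => ?_
    · rw [cubeDeriv_comp_update (hjS hS), h0]
    · rw [map_sub, Pi.sub_apply, cubeDeriv_comp_update (hjS hS), cubeDeriv_comp_update (hjS hS),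
        ← cubeDeriv_insert (hjS hS), prod_insert (hjS hS)]
      ring

theorem b2r_apply_mem_degreeLE_one (j : ι) : (fun x : ι → Bool => b2r (x j)) ∈ degreeLE 1 :=
  mem_degreeLE_of_dependsOn (s := {j}) fun x y h => by rw [h j (by simp)]

theorem mem_degreeLE_of_eq_sum {F : (ι → Bool) → ℝ} {k : ℕ} {𝒮 : Finset (Finset ι)}
    {c : Finset ι → ℝ} (hc : ∀ S, k < #S → c S = 0)
    (hF : ∀ x, F x = ∑ S ∈ 𝒮, c S * ∏ i ∈ S, b2r (x i)) : F ∈ degreeLE k := by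
  rw [show F = ∑ S ∈ 𝒮, c S • fun x => ∏ i ∈ S, b2r (x i) by ext x; simp [hF]]
  refine Submodule.sum_mem _ fun S _ => ?_
  rcases lt_or_ge k #S with hS | hS
  · simp [hc S hS]
  · refine Submodule.smul_mem _ _ (degreeLE_mono hS (mem_degreeLE_of_dependsOn ?_))
    intro x y hxy
    exact prod_congr rfl fun i hi => by rw [hxy i hi]

theorem exists_ne_update_of_cubeDeriv_ne_zero {f : (ι → Bool) → Bool} {S : Finset ι}
    {x : ι → Bool} (h : cubeDeriv S (fun y => b2r (f y)) x ≠ 0) {i : ι} (hi : i ∈ S) :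
    ∃ y, f y ≠ f (update y i (!y i)) := by
  by_contra! hf
  refine h (cubeDeriv_eq_zero_of_dependsOn (s := {i}ᶜ) (fun y z hyz => ?_) hi (by simp) x)
  by_cases hyzi : y i = z i
  · congr 2
    ext j
    by_cases hj : j = i
    · rw [hj, hyzi]
    · exact hyz j hj
  · have hz : z = update y i (!y i) := by
      ext j
      by_cases hj : j = i
      · subst hj
        revert hyzi
        cases y j <;> cases z j <;> simp
      · simp [hj, hyz j hj]
    rw [hz, ← hf]

end Multilinear

theorem hammN_pos (d : ℕ) : 0 < hammN d := by
  have := Nat.one_le_two_pow (n := d - 1)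
  unfold hammN
  omega

theorem hammN_succ {d : ℕ} (hd : d ≠ 0) : hammN (d + 1) = 2 + 2 * hammN d := by
  obtain ⟨e, rfl⟩ := Nat.exists_eq_succ_of_ne_zero hd
  have := Nat.one_le_two_pow (n := e)
  simp only [hammN, Nat.succ_sub_one, pow_succ]
  omega

theorem tarH_succ {d : ℕ} (hd : 2 ≤ d) (x : ℕ → Bool) :
    tarH (d + 1) x =
      xor (x 0) (xor ((!(xor (x 0) (x 1))) && tarH d (fun i => x (i + 2)))
        ((xor (x 0) (x 1)) && tarH d (fun i => x (i + (2 + hammN d))))) := by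
  obtain ⟨k, rfl⟩ := Nat.exists_eq_add_of_le' hd
  simp only [tarH, Nat.add_comm (2 + hammN (k + 2))]

theorem b2r_tarH_two :
    (fun x => b2r (tarH 2 x)) =
      (fun x => b2r (x 0)) + (fun x => b2r (x 1)) - (fun x => b2r (x 0) * b2r (x 1)) +
        (fun x => b2r (x 2) * b2r (x 3)) - (fun x => b2r (x 1) * b2r (x 2)) -
        (fun x => b2r (x 0) * b2r (x 3)) := by
  ext x
  simp only [tarH, Pi.add_apply, Pi.sub_apply]
  cases x 0 <;> cases x 1 <;> cases x 2 <;> cases x 3 <;> norm_num [b2r]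

theorem b2r_tarH_succ {d : ℕ} (hd : 2 ≤ d) :
    (fun x => b2r (tarH (d + 1) x)) =
      (fun x => b2r (x 0)) +
        (fun x => 1 - b2r (x 0) - b2r (x 1)) * (fun x => b2r (tarH d (fun i => x (i + 2)))) +
        (fun x => b2r (x 1) - b2r (x 0)) *
          (fun x => b2r (tarH d (fun i => x (i + (2 + hammN d))))) := by
  ext x
  simp only [tarH_succ hd, Pi.add_apply, Pi.mul_apply]
  cases x 0 <;> cases x 1 <;> cases tarH d (fun i => x (i + 2)) <;>
    cases tarH d (fun i => x (i + (2 + hammN d))) <;> norm_num [b2r]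

theorem dependsOn_tarH {d : ℕ} (hd : 2 ≤ d) : DependsOn (tarH d) (range (hammN d)) := by
  induction d, hd using Nat.le_induction with
  | base =>
    intro x y h
    simp only [hammN, coe_range, Set.mem_Iio] at h
    simp only [tarH, h 0 (by norm_num), h 1 (by norm_num), h 2 (by norm_num), h 3 (by norm_num)]
  | succ d hd ih =>
    intro x y h
    simp only [coe_range, Set.mem_Iio, hammN_succ (by omega : d ≠ 0)] at h
    rw [tarH_succ hd, tarH_succ hd, h 0 (by omega), h 1 (by omega),
      ih fun i hi => h (i + 2) (by simp at hi; omega),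
      ih fun i hi => h (i + (2 + hammN d)) (by simp at hi; omega)]

section Shift

variable {R : Type*} [CommRing R] {L G : (ℕ → Bool) → R} {P : Finset ℕ} {n c : ℕ}

theorem disjoint_image_add_of_lt (hPc : ∀ i ∈ P, i < c) (n : ℕ) :
    Disjoint P ((range n).image (· + c)) :=
  disjoint_left.2 fun i hiP hi => by
    obtain ⟨j, -, rfl⟩ := mem_image.1 hi
    exact absurd (hPc _ hiP) (by omega)

theorem insert_image_add_subset_range {e m : ℕ} (he : e < c) {S : Finset ℕ}
    (hS : S ⊆ range n) (hm : c + n ≤ m) : insert e (S.image (· + c)) ⊆ range m := by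
  refine insert_subset (mem_range.2 (by omega)) fun k hk => ?_
  obtain ⟨l, hl, rfl⟩ := mem_image.1 hk
  exact mem_range.2 (by have := mem_range.1 (hS hl); omega)

theorem card_insert_image_add {e : ℕ} (he : e < c) (S : Finset ℕ) :
    #(insert e (S.image (· + c))) = #S + 1 := by
  rw [card_insert_of_notMem (by simp; omega), card_image_of_injective _ (add_left_injective c)]

theorem mul_shift_mem_degreeLE {a b : ℕ} (hL : L ∈ degreeLE a) (hLP : DependsOn L P)
    (hG : G ∈ degreeLE b) (hGn : DependsOn G (range n)) (hPc : ∀ i ∈ P, i < c) :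
    L * (fun x => G (fun i => x (i + c))) ∈ degreeLE (a + b) :=
  mul_mem_degreeLE hL (comp_mem_degreeLE (add_left_injective c) hG) hLP (hGn.precomp _)
    (disjoint_image_add_of_lt hPc n)

theorem cubeDeriv_mul_shift (hLP : DependsOn L P) (hGn : DependsOn G (range n))
    (hPc : ∀ i ∈ P, i < c) {e : ℕ} (he : e ∈ P) {S : Finset ℕ} (hS : S ⊆ range n)
    (x : ℕ → Bool) :
    cubeDeriv (insert e (S.image (· + c))) (L * fun x => G (fun i => x (i + c))) x =
      cubeDeriv {e} L x * cubeDeriv S G (fun i => x (i + c)) := by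
  have hdisj := disjoint_image_add_of_lt hPc n
  have hSc : S.image (· + c) ⊆ (range n).image (· + c) := image_subset_image hS
  refine (cubeDeriv_mul hLP (hGn.precomp (· + c)) hdisj
    (insert_subset (mem_union_left _ he) (hSc.trans subset_union_right)) x).trans ?_
  rw [insert_inter_of_mem he,
    disjoint_iff_inter_eq_empty.1 (disjoint_of_subset_right hSc hdisj).symm, insert_empty,
    insert_inter_of_notMem (disjoint_left.1 hdisj he), inter_eq_left.2 hSc,
    cubeDeriv_image_comp (add_left_injective c)]
  rfl

end Shift

theorem dependsOn_b2r_tarH {d : ℕ} (hd : 2 ≤ d) :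
    DependsOn (fun x => b2r (tarH d x)) (range (hammN d)) :=
  fun _ _ h => congrArg b2r (dependsOn_tarH hd h)

theorem dependsOn_zero_one {F : (ℕ → Bool) → ℝ} {φ : Bool → Bool → ℝ}
    (hF : ∀ x, F x = φ (x 0) (x 1)) : DependsOn F ({0, 1} : Finset ℕ) := fun x y h => by
  rw [hF, hF, h 0 (by simp), h 1 (by simp)]

theorem tarH_mem_degreeLE {d : ℕ} (hd : 2 ≤ d) : (fun x => b2r (tarH d x)) ∈ degreeLE d := by
  induction d, hd using Nat.le_induction with
  | base =>
    have h1 (i : ℕ) : (fun x => b2r (x i)) ∈ degreeLE 2 :=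
      degreeLE_mono one_le_two (b2r_apply_mem_degreeLE_one i)
    have h2 (i j : ℕ) : (fun x => b2r (x i) * b2r (x j)) ∈ degreeLE 2 :=
      degreeLE_mono card_le_two <| mem_degreeLE_of_dependsOn (s := {i, j}) fun x y h => by
        rw [h i (by simp), h j (by simp)]
    rw [b2r_tarH_two]
    exact sub_mem (sub_mem (add_mem (sub_mem (add_mem (h1 0) (h1 1)) (h2 0 1)) (h2 2 3))
      (h2 1 2)) (h2 0 3)
  | succ d hd ih =>
    have hone : (fun _ => 1 : (ℕ → Bool) → ℝ) ∈ degreeLE 1 :=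
      degreeLE_mono zero_le_one (mem_degreeLE_of_dependsOn (s := ∅) fun _ _ _ => rfl)
    have h0 := b2r_apply_mem_degreeLE_one (ι := ℕ) 0
    have h1 := b2r_apply_mem_degreeLE_one (ι := ℕ) 1
    rw [b2r_tarH_succ hd, add_comm d 1]
    refine add_mem (add_mem (degreeLE_mono (by omega) h0) ?_) ?_
    · exact mul_shift_mem_degreeLE (sub_mem (sub_mem hone h0) h1)
        (dependsOn_zero_one (φ := fun a b => 1 - b2r a - b2r b) fun _ => rfl) ih
        (dependsOn_b2r_tarH hd) (by simp)
    · exact mul_shift_mem_degreeLE (sub_mem h1 h0)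
        (dependsOn_zero_one (φ := fun a b => b2r b - b2r a) fun _ => rfl) ih
        (dependsOn_b2r_tarH hd) fun i hi => by simp at hi; omega

theorem cubeDeriv_tarH_succ_left {d : ℕ} (hd : 2 ≤ d) {e : ℕ} (he : e < 2) {S : Finset ℕ}
    (hS : S ⊆ range (hammN d)) (hSne : S.Nonempty) (x : ℕ → Bool) :
    cubeDeriv (insert e (S.image (· + 2))) (fun y => b2r (tarH (d + 1) y)) x =
      -cubeDeriv S (fun y => b2r (tarH d y)) (fun i => x (i + 2)) := by
  obtain ⟨a, ha⟩ := hSne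
  have haS : a < hammN d := mem_range.1 (hS ha)
  have hmem : a + 2 ∈ insert e (S.image (· + 2)) := mem_insert_of_mem (mem_image_of_mem _ ha)
  have hx0 : cubeDeriv (insert e (S.image (· + 2))) (fun y => b2r (y 0)) x = 0 :=
    mem_degreeLE.1 (b2r_apply_mem_degreeLE_one 0) _
      (one_lt_card.2 ⟨e, mem_insert_self _ _, a + 2, hmem, by omega⟩) x
  have hz : cubeDeriv (insert e (S.image (· + 2)))
      ((fun y => b2r (y 1) - b2r (y 0)) *
        fun y => b2r (tarH d fun i => y (i + (2 + hammN d)))) x = 0 :=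
    cubeDeriv_eq_zero_of_dependsOn ((dependsOn_zero_one (φ := fun a b => b2r b - b2r a)
      fun _ => rfl).mul ((dependsOn_b2r_tarH hd).precomp (· + (2 + hammN d)))) hmem
      (fun h => by simp at h; omega) x
  have hA : cubeDeriv {e} (fun y => 1 - b2r (y 0) - b2r (y 1)) x = -1 := by
    rw [cubeDeriv_singleton]
    interval_cases e <;> simp [b2r] <;> ring
  rw [b2r_tarH_succ hd, map_add, map_add, Pi.add_apply, Pi.add_apply, hx0, hz,
    cubeDeriv_mul_shift (dependsOn_zero_one (φ := fun a b => 1 - b2r a - b2r b) fun _ => rfl)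
      (dependsOn_b2r_tarH hd) (fun i hi => by simp at hi; omega) (by simp; omega) hS,
    hA]
  ring

theorem cubeDeriv_tarH_succ_right {d : ℕ} (hd : 2 ≤ d) {S : Finset ℕ}
    (hS : S ⊆ range (hammN d)) (hSne : S.Nonempty) (x : ℕ → Bool) :
    cubeDeriv (insert 0 (S.image (· + (2 + hammN d)))) (fun y => b2r (tarH (d + 1) y)) x =
      -cubeDeriv S (fun y => b2r (tarH d y)) (fun i => x (i + (2 + hammN d))) := by
  obtain ⟨a, ha⟩ := hSne
  have hmem : a + (2 + hammN d) ∈ insert 0 (S.image (· + (2 + hammN d))) :=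
    mem_insert_of_mem (mem_image_of_mem _ ha)
  have hx0 : cubeDeriv (insert 0 (S.image (· + (2 + hammN d)))) (fun y => b2r (y 0)) x = 0 :=
    mem_degreeLE.1 (b2r_apply_mem_degreeLE_one 0) _
      (one_lt_card.2 ⟨0, mem_insert_self _ _, _, hmem, by omega⟩) x
  have hy : cubeDeriv (insert 0 (S.image (· + (2 + hammN d))))
      ((fun y => 1 - b2r (y 0) - b2r (y 1)) * fun y => b2r (tarH d fun i => y (i + 2))) x = 0 :=
    cubeDeriv_eq_zero_of_dependsOn ((dependsOn_zero_one (φ := fun a b => 1 - b2r a - b2r b)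
      fun _ => rfl).mul ((dependsOn_b2r_tarH hd).precomp (· + 2))) hmem
      (fun h => by simp at h; omega) x
  have hB : cubeDeriv {0} (fun y => b2r (y 1) - b2r (y 0)) x = -1 := by
    simp [cubeDeriv_singleton, b2r]
  rw [b2r_tarH_succ hd, map_add, map_add, Pi.add_apply, Pi.add_apply, hx0, hy,
    cubeDeriv_mul_shift (dependsOn_zero_one (φ := fun a b => b2r b - b2r a) fun _ => rfl)
      (dependsOn_b2r_tarH hd) (fun i hi => by simp at hi; omega) (by simp) hS, hB]
  ring

theorem exists_cubeDeriv_tarH_ne_zero {d : ℕ} (hd : 2 ≤ d) :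
    ∀ i < hammN d, ∃ S x, i ∈ S ∧ S ⊆ range (hammN d) ∧ #S = d ∧
      cubeDeriv S (fun y => b2r (tarH d y)) x ≠ 0 := by
  induction d, hd using Nat.le_induction with
  | base =>
    intro i hi
    simp only [hammN] at hi ⊢
    rcases lt_or_ge i 2 with hi2 | hi2
    · refine ⟨{0, 1}, fun _ => false, by simp; omega, by simp [insert_subset_iff], rfl, ?_⟩
      simp [cubeDeriv_insert, cubeDeriv_singleton, tarH, b2r]
    · refine ⟨{2, 3}, fun _ => false, by simp; omega, by simp [insert_subset_iff], rfl, ?_⟩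
      simp [cubeDeriv_insert, cubeDeriv_singleton, tarH, b2r]
  | succ d hd ih =>
    intro i hi
    have hN := hammN_succ (by omega : d ≠ 0)
    have left (e : ℕ) (he : e < 2) (j : ℕ) (hj : j < hammN d) :
        ∃ S x, e ∈ S ∧ j + 2 ∈ S ∧ S ⊆ range (hammN (d + 1)) ∧ #S = d + 1 ∧
          cubeDeriv S (fun y => b2r (tarH (d + 1) y)) x ≠ 0 := by
      obtain ⟨S, x, hjS, hS, hcard, hne⟩ := ih j hj
      refine ⟨insert e (S.image (· + 2)), fun k => x (k - 2), mem_insert_self _ _,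
        mem_insert_of_mem (mem_image_of_mem _ hjS), insert_image_add_subset_range he hS (by omega),
        by rw [card_insert_image_add he, hcard], ?_⟩
      rw [cubeDeriv_tarH_succ_left hd he hS ⟨j, hjS⟩, neg_ne_zero]
      simpa using hne
    rcases lt_or_ge i 2 with hi2 | hi2
    · obtain ⟨S, x, hiS, -, hS⟩ := left i hi2 0 (hammN_pos d)
      exact ⟨S, x, hiS, hS⟩
    rcases lt_or_ge i (2 + hammN d) with hiy | hiz
    · obtain ⟨S, x, -, hiS, hS⟩ := left 0 (by omega) (i - 2) (by omega)
      exact ⟨S, x, by rwa [Nat.sub_add_cancel hi2] at hiS, hS⟩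
    obtain ⟨S, x, hjS, hS, hcard, hne⟩ := ih (i - (2 + hammN d)) (by omega)
    have h0 : 0 < 2 + hammN d := by omega
    refine ⟨insert 0 (S.image (· + (2 + hammN d))), fun k => x (k - (2 + hammN d)),
      mem_insert_of_mem (mem_image.2 ⟨_, hjS, by omega⟩),
      insert_image_add_subset_range h0 hS (by omega), by rw [card_insert_image_add h0, hcard], ?_⟩
    rw [cubeDeriv_tarH_succ_right hd hS ⟨_, hjS⟩, neg_ne_zero]
    simpa using hne

/-- For every `d ≥ 2`, the function `H_d` depends exactly on its `3·2^{d-1} - 2` input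
variables and has multilinear polynomial degree exactly `d`. -/
theorem stmt_19 (d : ℕ) (hd : 2 ≤ d) :
    (∀ x y : ℕ → Bool, (∀ i < hammN d, x i = y i) → tarH d x = tarH d y) ∧
    (∀ i < hammN d, ∃ x : ℕ → Bool, tarH d x ≠ tarH d (Function.update x i (!(x i)))) ∧
    (∃ c : Finset ℕ → ℝ, (∀ S, d < S.card → c S = 0) ∧
      ∀ x : ℕ → Bool, b2r (tarH d x) =
        ∑ S ∈ (Finset.range (hammN d)).powerset, c S * ∏ i ∈ S, b2r (x i)) ∧
    ¬(∃ c : Finset ℕ → ℝ, (∀ S, d - 1 < S.card → c S = 0) ∧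
      ∀ x : ℕ → Bool, b2r (tarH d x) =
        ∑ S ∈ (Finset.range (hammN d)).powerset, c S * ∏ i ∈ S, b2r (x i)) := by
  refine ⟨fun x y h => dependsOn_tarH hd (by simpa using h), fun i hi => ?_,
    ⟨fun S => cubeDeriv S (fun x => b2r (tarH d x)) fun _ => false,
      fun S hS => mem_degreeLE.1 (tarH_mem_degreeLE hd) S hS _,
      eq_sum_cubeDeriv_mul_prod (dependsOn_b2r_tarH hd)⟩, ?_⟩
  · obtain ⟨S, x, hiS, -, -, hne⟩ := exists_cubeDeriv_tarH_ne_zero hd i hi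
    exact exists_ne_update_of_cubeDeriv_ne_zero hne hiS
  · rintro ⟨c, hc, hrep⟩
    obtain ⟨S, x, -, -, hcard, hne⟩ := exists_cubeDeriv_tarH_ne_zero hd 0 (hammN_pos d)
    exact hne (mem_degreeLE.1 (mem_degreeLE_of_eq_sum hc hrep) S (by omega) x)
end
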